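/- arXiv:2203.01511 — 6 statements merged into one kernel-verified Lean document; each statement's English description precedes it below -/
import Mathlib

section
/- Let d ≥ 1 be an integer, let F ⊂ ℤ^d be a finite set and A ⊂ ℤ^d a set such that F ⊕ A = ℤ^d, i.e. the translates f + A, f ∈ F, partition ℤ^d. Then for every natural number r that is coprime to all primes less than or equal to |F|, one also has rF ⊕ A = ℤ^d, where rF := { r·f : f ∈ F }. -/
open scoped Classical

namespace DilationAux

variable {d : ℕ}

private lemma sum_split {M : Type*} [AddCommMonoid M] {p : ℕ} [NeZero p] (g : ZMod p → M) :
    ∑ i, g i = g 0 + ∑ j : {j : ZMod p // j ≠ 0}, g j.1 := by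
  rw [Fintype.sum_eq_add_sum_compl 0 g]
  congr 1
  exact Finset.sum_subtype ({0}ᶜ : Finset (ZMod p)) (fun j => by simp) g

variable (p : ℕ) [NeZero p] (F : Finset (Fin d → ℤ)) (A : Set (Fin d → ℤ)) (x : Fin d → ℤ)

private def Tup : Type _ :=
  {t : ZMod p → {f : Fin d → ℤ // f ∈ F} // x - ∑ i, (t i).1 ∈ A}

instance : Finite (Tup p F A x) := Subtype.finite

instance : SMul (Multiplicative (ZMod p)) (Tup p F A x) :=
  ⟨fun g t => ⟨fun i => t.1 (i + g.toAdd), by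
    have h : ∑ i, (t.1 (i + g.toAdd)).1 = ∑ i, (t.1 i).1 :=
      Fintype.sum_equiv (Equiv.addRight g.toAdd) _ _ (fun i => rfl)
    show x - ∑ i, (t.1 (i + g.toAdd)).1 ∈ A
    rw [h]; exact t.2⟩⟩

private lemma smul_apply (g : Multiplicative (ZMod p)) (t : Tup p F A x) (i : ZMod p) :
    (g • t).1 i = t.1 (i + g.toAdd) := rfl

instance : MulAction (Multiplicative (ZMod p)) (Tup p F A x) where
  one_smul t := Subtype.ext (funext fun i => by
    show t.1 (i + Multiplicative.toAdd 1) = t.1 i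
    simp)
  mul_smul g h t := Subtype.ext (funext fun i => by
    show t.1 (i + Multiplicative.toAdd (g * h)) = t.1 (i + Multiplicative.toAdd g + Multiplicative.toAdd h)
    rw [toAdd_mul, add_assoc])

end DilationAux

open DilationAux in
private lemma prime_dilation {d : ℕ} (p : ℕ) (hp : p.Prime)
    (F : Finset (Fin d → ℤ)) (A : Set (Fin d → ℤ))
    (hF : F.Nonempty) (hcard : F.card < p)
    (htile : ∀ x : Fin d → ℤ, ∃! f, f ∈ F ∧ x - f ∈ A) :
    ∀ x : Fin d → ℤ, ∃! f, f ∈ F ∧ x - (p : ℤ) • f ∈ A := by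
  haveI : Fact p.Prime := ⟨hp⟩
  intro x
  -- the forward map from tuples to their restriction away from 0
  set φ : Tup p F A x → ({j : ZMod p // j ≠ 0} → {f : Fin d → ℤ // f ∈ F}) :=
    fun t => fun j => t.1 j.1 with hφ
  have hsum : ∀ t : ZMod p → {f : Fin d → ℤ // f ∈ F},
      ∑ i, (t i).1 = (t 0).1 + ∑ j : {j : ZMod p // j ≠ 0}, (t j.1).1 :=
    fun t => sum_split (fun i => (t i).1)
  have hbij : Function.Bijective φ := by
    constructor
    · rintro ⟨t, ht⟩ ⟨t', ht'⟩ h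
      have hne : ∀ j : ZMod p, j ≠ 0 → t j = t' j := fun j hj => congrFun h ⟨j, hj⟩
      have hsume : ∑ j : {j : ZMod p // j ≠ 0}, (t j.1).1
          = ∑ j : {j : ZMod p // j ≠ 0}, (t' j.1).1 :=
        Finset.sum_congr rfl (fun j _ => by rw [hne j.1 j.2])
      set y := x - ∑ j : {j : ZMod p // j ≠ 0}, (t j.1).1 with hy
      have h0 : (t 0).1 = (t' 0).1 := by
        obtain ⟨f, hf, huniq⟩ := htile y
        have e1 : (t 0).1 = f := by
          apply huniq
          refine ⟨(t 0).2, ?_⟩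
          have : y - (t 0).1 = x - ∑ i, (t i).1 := by rw [hy, hsum t]; abel
          rw [this]; exact ht
        have e2 : (t' 0).1 = f := by
          apply huniq
          refine ⟨(t' 0).2, ?_⟩
          have : y - (t' 0).1 = x - ∑ i, (t' i).1 := by
            rw [hy, hsum t', hsume]; abel
          rw [this]; exact ht'
        rw [e1, e2]
      apply Subtype.ext; funext i
      by_cases hi : i = 0
      · subst hi; exact Subtype.ext h0
      · exact hne i hi
    · intro s
      set y := x - ∑ j : {j : ZMod p // j ≠ 0}, (s j).1 with hy
      obtain ⟨f, ⟨hfF, hfA⟩, huniq⟩ := htile y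
      refine ⟨⟨fun i => if h : i = 0 then ⟨f, hfF⟩ else s ⟨i, h⟩, ?_⟩, ?_⟩
      · have : ∑ i, ((if h : i = (0 : ZMod p) then (⟨f, hfF⟩ : {f : Fin d → ℤ // f ∈ F}) else s ⟨i, h⟩)).1
            = f + ∑ j : {j : ZMod p // j ≠ 0}, (s j).1 := by
          rw [hsum]
          simp only [dif_pos rfl]
          congr 1
          exact Finset.sum_congr rfl (fun j _ => by rw [dif_neg j.2, Subtype.coe_eta])
        show x - _ ∈ A
        rw [this]
        have : x - (f + ∑ j : {j : ZMod p // j ≠ 0}, (s j).1) = y - f := by rw [hy]; abel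
        rw [this]; exact hfA
      · funext j
        simp only [hφ]
        rw [dif_neg j.2, Subtype.coe_eta]
  -- cardinality of the tuple space
  haveI : Finite ({j : ZMod p // j ≠ 0} → {f : Fin d → ℤ // f ∈ F}) := by infer_instance
  have hcard1 : Nat.card (Tup p F A x) = F.card ^ (p - 1) := by
    rw [Nat.card_congr (Equiv.ofBijective φ hbij)]
    rw [Nat.card_eq_fintype_card]
    rw [Fintype.card_fun]
    congr 1
    · exact Fintype.card_coe F
    · rw [Fintype.card_subtype_compl, Fintype.card_subtype_eq, ZMod.card]
  -- fixed points
  set count := (F.filter (fun f => x - (p : ℤ) • f ∈ A)).card with hcount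
  have hconst : ∀ t : Tup p F A x,
      (∀ g : Multiplicative (ZMod p), g • t = t) → ∀ i, t.1 i = t.1 0 := by
    intro t ht i
    have := congrFun (congrArg Subtype.val (ht (Multiplicative.ofAdd i))) 0
    rw [smul_apply] at this
    simpa using this
  have hsumconst : ∀ f : Fin d → ℤ, ∑ _i : ZMod p, f = (p : ℤ) • f := by
    intro f
    rw [Finset.sum_const, Finset.card_univ, ZMod.card, Nat.cast_smul_eq_nsmul]
  set ψ : MulAction.fixedPoints (Multiplicative (ZMod p)) (Tup p F A x) →
      {f : Fin d → ℤ // f ∈ F.filter (fun f => x - (p : ℤ) • f ∈ A)} :=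
    fun t => ⟨(t.1.1 0).1, by
      rw [Finset.mem_filter]
      refine ⟨(t.1.1 0).2, ?_⟩
      have h1 : ∑ i, (t.1.1 i).1 = (p : ℤ) • (t.1.1 0).1 := by
        rw [Finset.sum_congr rfl (fun i _ => by rw [hconst t.1 t.2 i])]
        exact hsumconst _
      have := t.1.2
      rwa [h1] at this⟩ with hψ
  have hψbij : Function.Bijective ψ := by
    constructor
    · rintro ⟨⟨t, ht⟩, htf⟩ ⟨⟨t', ht'⟩, htf'⟩ h
      simp only [hψ, Subtype.mk.injEq] at h
      have h0 : (t 0).1 = (t' 0).1 := h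
      apply Subtype.ext; apply Subtype.ext; funext i
      apply Subtype.ext
      rw [hconst ⟨t, ht⟩ htf i, hconst ⟨t', ht'⟩ htf' i]
      exact h0
    · rintro ⟨f, hf⟩
      rw [Finset.mem_filter] at hf
      simp only [hψ]
      refine ⟨⟨⟨fun _ => ⟨f, hf.1⟩, ?_⟩, ?_⟩, rfl⟩
      · show x - ∑ _i : ZMod p, f ∈ A
        rw [hsumconst]; exact hf.2
      · intro g
        apply Subtype.ext; funext i; rfl
  have hcard2 : Nat.card (MulAction.fixedPoints (Multiplicative (ZMod p)) (Tup p F A x))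
      = count := by
    rw [Nat.card_congr (Equiv.ofBijective ψ hψbij), Nat.card_eq_fintype_card,
      Fintype.card_coe]
  -- orbit counting
  have hpgroup : IsPGroup p (Multiplicative (ZMod p)) := by
    apply IsPGroup.of_card (n := 1)
    rw [Nat.card_eq_fintype_card, Fintype.card_multiplicative, ZMod.card, pow_one]
  have hmod : F.card ^ (p - 1) ≡ count [MOD p] := by
    have := hpgroup.card_modEq_card_fixedPoints (Tup p F A x)
    rwa [hcard1, hcard2] at this
  -- Fermat's little theorem
  have hF0 : 0 < F.card := Finset.card_pos.mpr hF
  have hfermat : F.card ^ (p - 1) ≡ 1 [MOD p] := by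
    have hne : (F.card : ZMod p) ≠ 0 := by
      rw [Ne, ZMod.natCast_eq_zero_iff]
      intro hdvd
      exact absurd (Nat.le_of_dvd hF0 hdvd) (not_le.mpr hcard)
    have := ZMod.pow_card_sub_one_eq_one hne
    rw [← ZMod.natCast_eq_natCast_iff]
    push_cast
    simpa using this
  have hcount1 : count ≡ 1 [MOD p] := hmod.symm.trans hfermat
  have hcountlt : count < p := lt_of_le_of_lt (Finset.card_filter_le _ _) hcard
  have hc : count = 1 := by
    have h1 : count % p = 1 % p := hcount1
    rwa [Nat.mod_eq_of_lt hcountlt, Nat.mod_eq_of_lt hp.one_lt] at h1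
  -- conclude
  obtain ⟨f, hfs⟩ := Finset.card_eq_one.mp (hcount ▸ hc)
  have hfmem : f ∈ F.filter (fun f => x - (p : ℤ) • f ∈ A) := by
    rw [hfs]; exact Finset.mem_singleton_self f
  rw [Finset.mem_filter] at hfmem
  refine ⟨f, hfmem, ?_⟩
  intro g hg
  have : g ∈ F.filter (fun f => x - (p : ℤ) • f ∈ A) := Finset.mem_filter.mpr hg
  rw [hfs, Finset.mem_singleton] at this
  exact this

private lemma main_aux {d : ℕ} :
    ∀ r : ℕ, ∀ (F : Finset (Fin d → ℤ)) (A : Set (Fin d → ℤ)),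
      (∀ x : Fin d → ℤ, ∃! f, f ∈ F ∧ x - f ∈ A) →
      (∀ p : ℕ, p.Prime → p ≤ F.card → Nat.Coprime r p) →
      F.Nonempty →
      ∀ x : Fin d → ℤ, ∃! f, f ∈ F ∧ x - (r : ℤ) • f ∈ A := by
  intro r
  induction r using Nat.strong_induction_on with
  | _ r ih =>
    intro F A htile hr hF x
    rcases Nat.lt_or_ge r 2 with hr2 | hr2
    · have : r = 0 ∨ r = 1 := by omega
      rcases this with rfl | rfl
      · -- r = 0 : F must be a singleton
        have hFcard : F.card = 1 := by
          have h2 : ¬ 2 ≤ F.card := by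
            intro h
            have hc := hr 2 Nat.prime_two h
            rw [Nat.coprime_zero_left] at hc
            omega
          have h0 : 0 < F.card := Finset.card_pos.mpr hF
          omega
        obtain ⟨f₀, hf₀⟩ := Finset.card_eq_one.mp hFcard
        subst hf₀
        obtain ⟨f, ⟨hfF, hfA⟩, _⟩ := htile (x + f₀)
        rw [Finset.mem_singleton] at hfF
        rw [hfF] at hfA
        have hxA : x ∈ A := by simpa using hfA
        refine ⟨f₀, ⟨Finset.mem_singleton_self f₀, by simpa using hxA⟩, ?_⟩
        rintro g ⟨hg, -⟩
        exact Finset.mem_singleton.mp hg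
      · -- r = 1
        simpa using htile x
    · -- r ≥ 2 : peel off the least prime factor
      have hr1 : r ≠ 1 := by omega
      set q := r.minFac with hq
      have hqp : q.Prime := Nat.minFac_prime hr1
      have hqdvd : q ∣ r := Nat.minFac_dvd r
      have hFq : F.card < q := by
        by_contra hle
        push_neg at hle
        have hcop : Nat.Coprime r q := hr q hqp hle
        exact hqp.ne_one (hcop.symm.eq_one_of_dvd hqdvd)
      have htile' := prime_dilation q hqp F A hF hFq htile
      set F' := F.image (fun f => (q : ℤ) • f) with hF'
      have hq0 : (q : ℤ) ≠ 0 := by exact_mod_cast hqp.ne_zero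
      have hinj : Function.Injective (fun f : Fin d → ℤ => (q : ℤ) • f) :=
        smul_right_injective _ hq0
      have htile'' : ∀ y : Fin d → ℤ, ∃! g, g ∈ F' ∧ y - g ∈ A := by
        intro y
        obtain ⟨f, ⟨hfF, hfA⟩, huniq⟩ := htile' y
        refine ⟨(q : ℤ) • f, ⟨Finset.mem_image_of_mem _ hfF, hfA⟩, ?_⟩
        rintro g ⟨hg, hgA⟩
        obtain ⟨f', hf'F, rfl⟩ := Finset.mem_image.mp hg
        rw [huniq f' ⟨hf'F, hgA⟩]
      set m := r / q with hm
      have hrm : r = q * m := (Nat.mul_div_cancel' hqdvd).symm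
      have hmlt : m < r := Nat.div_lt_self (by omega) hqp.one_lt
      have hmdvd : m ∣ r := Nat.div_dvd_of_dvd hqdvd
      have hF'card : F'.card = F.card := Finset.card_image_of_injective F hinj
      have hr' : ∀ p : ℕ, p.Prime → p ≤ F'.card → Nat.Coprime m p := by
        intro p hp hle
        exact Nat.Coprime.coprime_dvd_left hmdvd (hr p hp (hF'card ▸ hle))
      obtain ⟨g, ⟨hgF', hgA⟩, huniq⟩ :=
        ih m hmlt F' A htile'' hr' (hF.image _) x
      obtain ⟨f, hfF, rfl⟩ := Finset.mem_image.mp hgF'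
      have hsmul : ∀ f' : Fin d → ℤ, (m : ℤ) • ((q : ℤ) • f') = (r : ℤ) • f' := by
        intro f'
        rw [smul_smul]
        congr 1
        push_cast [hrm]
        ring
      refine ⟨f, ⟨hfF, by rw [← hsmul]; exact hgA⟩, ?_⟩
      rintro f' ⟨hf'F, hf'A⟩
      have : (q : ℤ) • f' = (q : ℤ) • f := by
        apply huniq
        exact ⟨Finset.mem_image_of_mem _ hf'F, by rw [hsmul]; exact hf'A⟩
      exact hinj this

/-- **Dilation lemma for tilings of ℤ^d.**  If the translates `f + A`, `f ∈ F`, partition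
`ℤ^d` (i.e. every `x` lies in exactly one translate), then for every natural number `r`
coprime to all primes `p ≤ |F|`, the translates `r•f + A`, `f ∈ F`, also partition `ℤ^d`. -/
theorem dilation_lemma_Zd {d : ℕ} (hd : 1 ≤ d)
    (F : Finset (Fin d → ℤ)) (A : Set (Fin d → ℤ))
    (htile : ∀ x : Fin d → ℤ, ∃! f, f ∈ F ∧ x - f ∈ A)
    (r : ℕ) (hr : ∀ p : ℕ, p.Prime → p ≤ F.card → Nat.Coprime r p) :
    ∀ x : Fin d → ℤ, ∃! f, f ∈ F ∧ x - (r : ℤ) • f ∈ A := by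
  have hF : F.Nonempty := by
    obtain ⟨f, ⟨hfF, -⟩, -⟩ := htile (fun _ => 0)
    exact ⟨f, hfF⟩
  exact main_aux r F A htile hr hF
end

section
/- Let d ≥ 1, let F ⊂ ℤ^d be a finite set with 0 ∈ F, and let A ⊂ ℤ^d satisfy F ⊕ A = ℤ^d. Let q be the product of all primes less than or equal to 2|F|. Then there is a decomposition 1_A = 1_{ℤ^d} − Σ_{f ∈ F \ {0}} φ_f, where for each f ∈ F \ {0}, φ_f : ℤ^d → [0,1] is a function which is qf-periodic, i.e. φ_f(qf + x) = φ_f(x) for every x ∈ ℤ^d. -/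
/-!
For a prime `p > |F|`, the tiling says `1_F * 1_A = 1` in the group ring of `ℤ^d` over `𝔽_p`
acting on functions by convolution. Frobenius turns `1_F ^ p` into `1_{p•F}`, and
`1_F ^ (p - 1) * 1 = |F| ^ (p - 1) = 1`, so `1_{p•F} * 1_A = 1` mod `p`; since this count is at most
`|F| < p`, `p • F` tiles with `A` as well. Iterating, `r • F` tiles with `A` whenever every prime
factor of `r` exceeds `|F|`, in particular for `r = 1 + j q`, so that
`1_A x + ∑_{f ≠ 0} 1_A (x - (1 + j q) f) = 1` for every `j`. Averaging over `j` with a Banach limit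
gives `φ_f`; its invariance under `j ↦ j + 1` is the `q f`-periodicity.
-/

open Finset Filter Topology

section Translation

variable (k G : Type*) [CommRing k] [AddCommGroup G]

def translationHom : Multiplicative G →* Module.End k (G → k) where
  toFun g := LinearMap.funLeft k k (· - g.toAdd)
  map_one' := by ext; simp
  map_mul' g h := by ext; simp [sub_sub]

noncomputable def translateAlgHom : AddMonoidAlgebra k G →ₐ[k] Module.End k (G → k) :=
  AddMonoidAlgebra.lift k (Module.End k (G → k)) G (translationHom k G)

variable {k G}

lemma translateAlgHom_sum_single {ι : Type*} (s : Finset ι) (e : ι → G) (v : G → k) (x : G) :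
    translateAlgHom k G (∑ i ∈ s, AddMonoidAlgebra.single (e i) 1) v x = ∑ i ∈ s, v (x - e i) := by
  simp [translateAlgHom, translationHom]

end Translation

section Tiling

variable {G ι : Type*} [AddCommGroup G] {s : Finset ι} {e : ι → G} {A : Set G}

def IsTiling (s : Finset ι) (e : ι → G) (A : Set G) : Prop :=
  ∀ x, ∃! i, i ∈ s ∧ x - e i ∈ A

open Classical in
lemma isTiling_iff_card_filter : IsTiling s e A ↔ ∀ x, #{i ∈ s | x - e i ∈ A} = 1 := by
  simp only [IsTiling, card_eq_one_iff_existsUnique, mem_filter]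

lemma IsTiling.nonempty (h : IsTiling s e A) : s.Nonempty :=
  let ⟨i, ⟨hi, _⟩, _⟩ := h 0; ⟨i, hi⟩

lemma IsTiling.sum_indicator_eq_one {R : Type*} [AddCommMonoidWithOne R] (h : IsTiling s e A)
    (x : G) : ∑ i ∈ s, A.indicator (fun _ => (1 : R)) (x - e i) = 1 := by
  classical
  simp only [Set.indicator_apply]
  rw [sum_boole, isTiling_iff_card_filter.1 h x, Nat.cast_one]

theorem IsTiling.nsmul_prime {p : ℕ} (h : IsTiling s e A) (hp : p.Prime) (hs : #s < p) :
    IsTiling s (p • e) A := by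
  classical
  have := Fact.mk hp
  have := charP_of_injective_algebraMap' (ZMod p) (A := AddMonoidAlgebra (ZMod p) G) p
  set T := translateAlgHom (ZMod p) G
  set α : AddMonoidAlgebra (ZMod p) G := ∑ i ∈ s, AddMonoidAlgebra.single (e i) 1 with hα
  set ind : G → ZMod p := A.indicator fun _ => 1
  have hα_ind : T α ind = 1 := funext fun x => by
    rw [translateAlgHom_sum_single, h.sum_indicator_eq_one, Pi.one_apply]
  have hα_one : T α 1 = (#s : ZMod p) • 1 := funext fun x => by
    rw [translateAlgHom_sum_single]
    simp
  have hpow_one : ∀ n, T (α ^ n) 1 = (#s : ZMod p) ^ n • 1 := by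
    intro n
    induction n with
    | zero => simp
    | succ n ih =>
      rw [pow_succ, map_mul, Module.End.mul_apply, hα_one, map_smul, ih, smul_smul, pow_succ']
  have hfrob : α ^ p = ∑ i ∈ s, AddMonoidAlgebra.single ((p • e) i) 1 := by
    simp [hα, sum_pow_char, AddMonoidAlgebra.single_pow]
  have hfermat : (#s : ZMod p) ^ (p - 1) = 1 :=
    ZMod.pow_card_sub_one_eq_one fun h0 => by
      rw [ZMod.natCast_eq_zero_iff] at h0
      exact (Nat.le_of_dvd h.nonempty.card_pos h0).not_gt hs
  have hαp : T (α ^ p) ind = 1 := by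
    rw [← pow_sub_one_mul hp.ne_zero, map_mul, Module.End.mul_apply, hα_ind, hpow_one,
      hfermat, one_smul]
  rw [isTiling_iff_card_filter]
  intro x
  have hmod : ((#{i ∈ s | x - (p • e) i ∈ A} : ℕ) : ZMod p) = ((1 : ℕ) : ZMod p) := by
    have := congr_fun hαp x
    rw [hfrob, translateAlgHom_sum_single] at this
    simpa [ind, Set.indicator_apply, sum_boole] using this
  rw [ZMod.natCast_eq_natCast_iff', Nat.mod_eq_of_lt ((card_filter_le _ _).trans_lt hs),
    Nat.mod_eq_of_lt hp.one_lt] at hmod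
  exact hmod

theorem IsTiling.nsmul (h : IsTiling s e A) {r : ℕ} (hr0 : r ≠ 0)
    (hr : ∀ p, p.Prime → p ∣ r → #s < p) : IsTiling s (r • e) A := by
  induction r using induction_on_primes with
  | zero => exact absurd rfl hr0
  | one => rwa [one_smul]
  | prime_mul p a hp ih =>
    have ha : IsTiling s (a • e) A :=
      ih (right_ne_zero_of_mul hr0) fun q hq hqa => hr q hq (dvd_mul_of_dvd_right hqa p)
    rw [mul_smul]
    exact ha.nsmul_prime hp (hr p hp (dvd_mul_right p a))

end Tiling

lemma Nat.lt_of_prime_dvd_one_add_mul_primorial {p n j : ℕ} (hp : p.Prime)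
    (h : p ∣ 1 + j * primorial n) : n < p := by
  by_contra! hpn
  have hpj : p ∣ j * primorial n := dvd_mul_of_dvd_right (hp.dvd_primorial_iff.2 hpn) j
  exact hp.one_lt.ne' (Nat.dvd_one.1 ((Nat.dvd_add_left hpj).1 h))

section BanachLimit

noncomputable def cesaroMean (u : ℕ → ℝ) (N : ℕ) : ℝ := (N : ℝ)⁻¹ * ∑ j ∈ range N, u j

/-- The limit of the Cesàro means along a free ultrafilter: a positive, shift-invariant extension of
`lim` to bounded sequences (on unbounded ones it is a junk value). -/
noncomputable def banachLimit (u : ℕ → ℝ) : ℝ :=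
  limUnder (hyperfilter ℕ : Filter ℕ) (cesaroMean u)

variable {u : ℕ → ℝ} {a b : ℝ}

lemma cesaroMean_mem_Icc (hu : ∀ j, u j ∈ Set.Icc a b) {N : ℕ} (hN : 0 < N) :
    cesaroMean u N ∈ Set.Icc a b := by
  have hN' : (0 : ℝ) < N := by exact_mod_cast hN
  constructor
  · rw [cesaroMean, le_inv_mul_iff₀ hN']
    simpa using card_nsmul_le_sum (range N) u a fun j _ => (hu j).1
  · rw [cesaroMean, inv_mul_le_iff₀ hN']
    simpa using sum_le_card_nsmul (range N) u b fun j _ => (hu j).2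

lemma eventually_cesaroMean_mem_Icc (hu : ∀ j, u j ∈ Set.Icc a b) :
    ∀ᶠ N in (hyperfilter ℕ : Filter ℕ), cesaroMean u N ∈ Set.Icc a b :=
  ((eventually_gt_atTop 0).mono fun _ hN => cesaroMean_mem_Icc hu hN).filter_mono
    Nat.hyperfilter_le_atTop

lemma tendsto_cesaroMean_banachLimit (hu : ∀ j, u j ∈ Set.Icc a b) :
    Tendsto (cesaroMean u) (hyperfilter ℕ) (𝓝 (banachLimit u)) := by
  obtain ⟨L, -, hL⟩ := isCompact_Icc.ultrafilter_le_nhds (Ultrafilter.map (cesaroMean u) _)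
    (le_principal_iff.2 (eventually_cesaroMean_mem_Icc hu))
  exact tendsto_nhds_limUnder ⟨L, hL⟩

lemma banachLimit_mem_Icc (hu : ∀ j, u j ∈ Set.Icc a b) : banachLimit u ∈ Set.Icc a b :=
  isClosed_Icc.mem_of_tendsto (tendsto_cesaroMean_banachLimit hu)
    (eventually_cesaroMean_mem_Icc hu)

lemma cesaroMean_comp_succ (u : ℕ → ℝ) (N : ℕ) :
    cesaroMean (fun j => u (j + 1)) N = cesaroMean u N + (N : ℝ)⁻¹ * (u N - u 0) := by
  have hsum : ∑ j ∈ range N, u (j + 1) = ∑ j ∈ range N, u j + (u N - u 0) := by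
    have := sum_range_succ' u N
    rw [sum_range_succ] at this
    linarith
  rw [cesaroMean, cesaroMean, hsum, mul_add]

lemma banachLimit_comp_succ (hu : ∀ j, u j ∈ Set.Icc a b) :
    banachLimit (fun j => u (j + 1)) = banachLimit u := by
  have hbdd : IsBoundedUnder (· ≤ ·) atTop fun N => ‖u N - u 0‖ :=
    isBoundedUnder_of ⟨b - a, fun N => by
      rw [Real.norm_eq_abs, abs_sub_le_iff]
      constructor <;> linarith [(hu N).1, (hu N).2, (hu 0).1, (hu 0).2]⟩
  have hsmall : Tendsto (fun N : ℕ => (N : ℝ)⁻¹ * (u N - u 0)) atTop (𝓝 0) :=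
    tendsto_inv_atTop_nhds_zero_nat.zero_mul_isBoundedUnder_le hbdd
  have hshift :=
    (tendsto_cesaroMean_banachLimit hu).add (hsmall.mono_left Nat.hyperfilter_le_atTop)
  rw [add_zero] at hshift
  exact tendsto_nhds_unique (tendsto_cesaroMean_banachLimit fun j => hu (j + 1))
    (hshift.congr fun N => (cesaroMean_comp_succ u N).symm)

lemma sum_banachLimit_eq {ι : Type*} (s : Finset ι) {u : ι → ℕ → ℝ}
    (hu : ∀ i ∈ s, ∀ j, u i j ∈ Set.Icc a b) {c : ℝ} (hsum : ∀ j, ∑ i ∈ s, u i j = c) :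
    ∑ i ∈ s, banachLimit (u i) = c := by
  have hlim : Tendsto (fun N => ∑ i ∈ s, cesaroMean (u i) N) (hyperfilter ℕ)
      (𝓝 (∑ i ∈ s, banachLimit (u i))) :=
    tendsto_finsetSum _ fun i hi => tendsto_cesaroMean_banachLimit (hu i hi)
  have hconst : ∀ N, 0 < N → ∑ i ∈ s, cesaroMean (u i) N = c := fun N hN => by
    simp only [cesaroMean, ← mul_sum]
    rw [sum_comm]
    simp only [hsum, sum_const, card_range, nsmul_eq_mul]
    field_simp
  refine tendsto_nhds_unique hlim (tendsto_const_nhds.congr' ?_)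
  exact ((eventually_gt_atTop 0).mono fun N hN => (hconst N hN).symm).filter_mono
    Nat.hyperfilter_le_atTop

end BanachLimit

theorem structure_theorem_Zd_general {d : ℕ}
    (F : Finset (Fin d → ℤ)) (A : Set (Fin d → ℤ))
    (h0 : (0 : Fin d → ℤ) ∈ F)
    (htile : ∀ x : Fin d → ℤ, ∃! f, f ∈ F ∧ x - f ∈ A)
    (q : ℕ) (hq : q = ∏ p ∈ Finset.filter Nat.Prime (Finset.range (2 * F.card + 1)), p) :
    ∃ φ : (Fin d → ℤ) → (Fin d → ℤ) → ℝ,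
      (∀ f ∈ F.erase 0, ∀ x, φ f x ∈ Set.Icc (0 : ℝ) 1) ∧
      (∀ f ∈ F.erase 0, ∀ x, φ f ((q : ℤ) • f + x) = φ f x) ∧
      (∀ x, Set.indicator A (fun _ => (1 : ℝ)) x = 1 - ∑ f ∈ F.erase 0, φ f x) := by
  replace hq : q = primorial (2 * #F) := hq
  have hdilate (j : ℕ) : IsTiling F ((1 + j * q) • id) A :=
    IsTiling.nsmul htile (by omega) fun p hp hpj =>
      (Nat.lt_of_prime_dvd_one_add_mul_primorial hp (hq ▸ hpj)).trans_le' (by omega)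
  set ind := A.indicator fun _ => (1 : ℝ)
  have hind (y) : ind y ∈ Set.Icc (0 : ℝ) 1 := by
    by_cases hy : y ∈ A <;> simp [ind, hy]
  refine ⟨fun f x => banachLimit fun j => ind (x - (1 + j * q) • f), fun f _ x =>
    banachLimit_mem_Icc fun j => hind _, fun f _ x => ?_, fun x => ?_⟩
  · dsimp only
    rw [← banachLimit_comp_succ fun j => hind _]
    congr! 2 with j
    rw [natCast_zsmul, show 1 + (j + 1) * q = q + (1 + j * q) by ring, add_smul]
    abel_nf
  · have hsum (j : ℕ) : ∑ f ∈ F.erase 0, ind (x - (1 + j * q) • f) = 1 - ind x := by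
      have := (hdilate j).sum_indicator_eq_one (R := ℝ) x
      rw [← add_sum_erase _ _ h0] at this
      simp only [Pi.smul_apply, id, smul_zero, sub_zero] at this
      linarith
    rw [sum_banachLimit_eq _ (fun f _ j => hind _) hsum]
    ring

/-- **Structure theorem for tilings of ℤ^d.**  Suppose `F ⊕ A = ℤ^d` with `0 ∈ F`, and let
`q` be the product of all primes `p ≤ 2|F|`.  Then `1_A = 1 - ∑_{f ∈ F \ {0}} φ_f` where each
`φ_f : ℤ^d → [0,1]` is `q•f`-periodic. -/
theorem structure_theorem_Zd {d : ℕ} (hd : 1 ≤ d)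
    (F : Finset (Fin d → ℤ)) (A : Set (Fin d → ℤ))
    (h0 : (0 : Fin d → ℤ) ∈ F)
    (htile : ∀ x : Fin d → ℤ, ∃! f, f ∈ F ∧ x - f ∈ A)
    (q : ℕ) (hq : q = ∏ p ∈ Finset.filter Nat.Prime (Finset.range (2 * F.card + 1)), p) :
    ∃ φ : (Fin d → ℤ) → (Fin d → ℤ) → ℝ,
      (∀ f ∈ F.erase 0, ∀ x, φ f x ∈ Set.Icc (0 : ℝ) 1) ∧
      (∀ f ∈ F.erase 0, ∀ x, φ f ((q : ℤ) • f + x) = φ f x) ∧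
      (∀ x, Set.indicator A (fun _ => (1 : ℝ)) x = 1 - ∑ f ∈ F.erase 0, φ f x) :=
  structure_theorem_Zd_general F A h0 htile q hq
end

section
/- Let Γ be a (discrete) abelian group acting on a measure space (X, 𝒳, μ) by measure-preserving transformations, and suppose F ⊙ A =_ae X for some finite set F ⊂ Γ and measurable A ⊂ X. Then for every integer r coprime to |F|, one has F^r ⊙ A =_ae X, where F^r := { f^r : f ∈ F }; moreover, if A has positive measure then the map f ↦ f^r is injective on F, so |F^r| = |F|. -/
open MeasureTheory Pointwise

/-!
For almost every `x`, the translates `f • A` tile the whole orbit of `x` under the countable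
group `⟨F⟩`, so it suffices to dilate a tiling of one orbit; this is Tijdeman's argument.
Let `t_s = ∑_{f ∈ F} δ_{f^s}` in `𝔽_p[Γ]`. If the `f^s • A` tile the orbit, pairing
`t_s^{k+1}` with the indicator of `A` along the orbit gives `|F|^k`, while Frobenius gives
`t_s^p = t_{sp}`; so for `p ∤ |F|` every point of the orbit lies in some `f^{sp} • A`.
On the other hand, since `F` tiles, the numbers of `f ∈ F` with `y ∈ f^r • A` average to
exactly one over any `F`-translate of a point; so covering forces a tiling by the `f^{sp} • A`,
and so does the disjointness of the `f^{-s} • A` inherited from the tiling by the `f^s • A`.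
Factoring `r` into primes (and a sign) finishes the proof.
-/

theorem Finset.eq_one_of_sum_eq_card {ι : Type*} {s : Finset ι} {a : ι → ℕ}
    (hsum : ∑ i ∈ s, a i = s.card) (ha : (∀ i ∈ s, 1 ≤ a i) ∨ ∀ i ∈ s, a i ≤ 1) :
    ∀ i ∈ s, a i = 1 := by
  have hs : ∑ i ∈ s, a i = ∑ _i ∈ s, 1 := by simpa using hsum
  rcases ha with ha | ha
  · exact fun i hi => ((Finset.sum_eq_sum_iff_of_le ha).1 hs.symm i hi).symm
  · exact (Finset.sum_eq_sum_iff_of_le ha).1 hs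

theorem Subgroup.countable_closure {G : Type*} [Group G] {S : Set G} (hS : S.Countable) :
    (Subgroup.closure S : Set G).Countable := by
  have := hS.to_subtype
  rw [FreeGroup.closure_eq_range, MonoidHom.coe_range]
  exact Set.countable_range _

namespace DilatedTiling

section Group

variable {G X : Type*} [Group G] [MulAction G X]

open scoped Classical in
noncomputable def count (F : Finset G) (A : Set X) (r : ℤ) (x : X) : ℕ :=
  (F.filter fun f => (f ^ r)⁻¹ • x ∈ A).card

def TilesOrbit (F : Finset G) (A : Set X) (r : ℤ) (x : X) : Prop :=
  ∀ g ∈ Subgroup.closure (F : Set G), count F A r (g • x) = 1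

variable {F : Finset G} {A : Set X} {r : ℤ} {x : X}

theorem count_eq_one_iff : count F A r x = 1 ↔ ∃! f, f ∈ F ∧ x ∈ f ^ r • A := by
  simp only [count, Finset.card_eq_one_iff_existsUnique, Finset.mem_filter,
    Set.mem_smul_set_iff_inv_smul_mem]

namespace TilesOrbit

theorem count_eq (h : TilesOrbit F A r x) : count F A r x = 1 := by
  simpa using h 1 (one_mem _)

theorem smul (h : TilesOrbit F A r x) {g : G} (hg : g ∈ Subgroup.closure (F : Set G)) :
    TilesOrbit F A r (g • x) := fun g' hg' => by
  simpa only [smul_smul] using h _ (mul_mem hg' hg)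

theorem nonempty (h : TilesOrbit F A r x) : F.Nonempty := by
  obtain ⟨f, ⟨hf, -⟩, -⟩ := count_eq_one_iff.1 h.count_eq
  exact ⟨f, hf⟩

end TilesOrbit

variable (R : Type*) [CommSemiring R]

noncomputable def dilate (F : Finset G) (s : ℤ) : MonoidAlgebra R G :=
  ∑ f ∈ F, MonoidAlgebra.single (f ^ s) 1

-- `hits R A x u = ∑ g, u g * [x ∈ g • A]`
noncomputable def hits (A : Set X) (x : X) : MonoidAlgebra R G →ₗ[R] R :=
  Finsupp.linearCombination R (fun g : G => A.indicator 1 (g⁻¹ • x)) ∘ₗ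
    (MonoidAlgebra.coeffLinearEquiv R).toLinearMap

variable {R}

theorem hits_single (g : G) (c : R) :
    hits R A x (MonoidAlgebra.single g c) = c * A.indicator 1 (g⁻¹ • x) := by
  simp [hits]

theorem hits_dilate : hits R A x (dilate R F r) = count F A r x := by
  classical
  simp [dilate, hits_single, Set.indicator_apply, count]

theorem hits_dilate_mul (u : MonoidAlgebra R G) :
    hits R A x (dilate R F r * u) = ∑ f ∈ F, hits R A ((f ^ r)⁻¹ • x) u := by
  suffices hits R A x ∘ₗ LinearMap.mulLeft R (dilate R F r) =
      ∑ f ∈ F, hits R A ((f ^ r)⁻¹ • x) by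
    simpa using LinearMap.congr_fun this u
  ext g
  simp [dilate, Finset.sum_mul, MonoidAlgebra.single_mul_single, hits_single, mul_inv_rev,
    mul_smul]

theorem TilesOrbit.hits_dilate_pow (h : TilesOrbit F A r x) (k : ℕ) :
    hits R A x (dilate R F r ^ (k + 1)) = (F.card : R) ^ k := by
  induction k generalizing x with
  | zero => simp [hits_dilate, h.count_eq]
  | succ k ih =>
    rw [pow_succ', hits_dilate_mul, Finset.sum_congr rfl fun f hf =>
      ih (h.smul (inv_mem (zpow_mem (Subgroup.subset_closure hf) r))), Finset.sum_const,
      nsmul_eq_mul, pow_succ']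

end Group

section CommGroup

variable {G X : Type*} [CommGroup G] [MulAction G X] {F : Finset G} {A : Set X} {x : X}

theorem dilate_pow_char (R : Type*) [CommSemiring R] (p : ℕ) [ExpChar R p] (F : Finset G)
    (s : ℤ) : dilate R F s ^ p = dilate R F (s * p) := by
  have := expChar_of_injective_algebraMap
    (FaithfulSMul.algebraMap_injective R (MonoidAlgebra R G)) p
  rw [dilate, sum_pow_char]
  simp [dilate, zpow_mul]

open scoped Classical in
theorem sum_count_inv_smul (h : TilesOrbit F A 1 x) (r : ℤ) :
    ∑ f ∈ F, count F A r (f⁻¹ • x) = F.card := by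
  have hcomm : ∀ f f' : G, (f' ^ r)⁻¹ • f⁻¹ • x = (f ^ (1 : ℤ))⁻¹ • (f' ^ r)⁻¹ • x := by
    intro f f'
    rw [smul_smul, smul_smul, zpow_one, mul_comm]
  calc ∑ f ∈ F, count F A r (f⁻¹ • x)
      = ∑ f' ∈ F, count F A 1 ((f' ^ r)⁻¹ • x) := by
        simp only [count, Finset.card_filter, hcomm]
        exact Finset.sum_comm
    _ = ∑ _f' ∈ F, 1 := Finset.sum_congr rfl fun f' hf' =>
        h _ (inv_mem (zpow_mem (Subgroup.subset_closure hf') r))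
    _ = F.card := by simp

namespace TilesOrbit

theorem of_one_le_or_le_one {r : ℤ} (h : TilesOrbit F A 1 x)
    (hr : (∀ g ∈ Subgroup.closure (F : Set G), 1 ≤ count F A r (g • x)) ∨
      ∀ g ∈ Subgroup.closure (F : Set G), count F A r (g • x) ≤ 1) :
    TilesOrbit F A r x := by
  obtain ⟨f₀, hf₀⟩ := h.nonempty
  intro g hg
  have hf₀g : f₀ * g ∈ Subgroup.closure (F : Set G) := mul_mem (Subgroup.subset_closure hf₀) hg
  have hmem : ∀ f ∈ F, f⁻¹ * (f₀ * g) ∈ Subgroup.closure (F : Set G) := fun f hf =>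
    mul_mem (inv_mem (Subgroup.subset_closure hf)) hf₀g
  have hall := Finset.eq_one_of_sum_eq_card (sum_count_inv_smul (h.smul hf₀g) r) <|
    hr.imp (fun hr f hf => by simpa only [smul_smul] using hr _ (hmem f hf))
      (fun hr f hf => by simpa only [smul_smul] using hr _ (hmem f hf))
  simpa only [smul_smul, inv_mul_cancel_left] using hall f₀ hf₀

theorem count_neg_le_one {s : ℤ} (h : TilesOrbit F A s x) : count F A (-s) x ≤ 1 := by
  refine Finset.card_le_one.2 fun f₁ hf₁ f₂ hf₂ => ?_
  simp only [Finset.mem_filter, zpow_neg, inv_inv] at hf₁ hf₂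
  -- `(f₁ ^ s * f₂ ^ s) • x` lies both in `f₁ ^ s • A` and in `f₂ ^ s • A`
  have hmem : f₁ ^ s * f₂ ^ s ∈ Subgroup.closure (F : Set G) :=
    mul_mem (zpow_mem (Subgroup.subset_closure hf₁.1) s)
      (zpow_mem (Subgroup.subset_closure hf₂.1) s)
  refine (count_eq_one_iff.1 (h _ hmem)).unique ⟨hf₁.1, ?_⟩ ⟨hf₂.1, ?_⟩
  · rw [Set.mem_smul_set_iff_inv_smul_mem, smul_smul, inv_mul_cancel_left]
    exact hf₂.2
  · rw [Set.mem_smul_set_iff_inv_smul_mem, smul_smul, mul_comm (f₁ ^ s), inv_mul_cancel_left]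
    exact hf₁.2

theorem neg {s : ℤ} (h₁ : TilesOrbit F A 1 x) (h : TilesOrbit F A s x) :
    TilesOrbit F A (-s) x :=
  h₁.of_one_le_or_le_one <| .inr fun _g hg => (h.smul hg).count_neg_le_one

theorem count_mul_prime_ne_zero {s : ℤ} {p : ℕ} (hp : p.Prime) (hpF : ¬ p ∣ F.card)
    (h : TilesOrbit F A s x) : count F A (s * p) x ≠ 0 := by
  have := Fact.mk hp
  intro h0
  have key := h.hits_dilate_pow (R := ZMod p) (p - 1)
  rw [Nat.sub_add_cancel hp.one_le, dilate_pow_char, hits_dilate, h0, Nat.cast_zero] at key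
  exact pow_ne_zero _ (mt (ZMod.natCast_eq_zero_iff _ _).1 hpF) key.symm

theorem mul_prime {s : ℤ} {p : ℕ} (hp : p.Prime) (hpF : ¬ p ∣ F.card) (h₁ : TilesOrbit F A 1 x)
    (h : TilesOrbit F A s x) : TilesOrbit F A (s * p) x :=
  h₁.of_one_le_or_le_one <| .inl fun _g hg =>
    Nat.one_le_iff_ne_zero.2 ((h.smul hg).count_mul_prime_ne_zero hp hpF)

theorem zero (hF : F.card = 1) (h₁ : TilesOrbit F A 1 x) : TilesOrbit F A 0 x := by
  obtain ⟨f₀, rfl⟩ := Finset.card_eq_one.1 hF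
  intro g hg
  obtain ⟨f, ⟨hf, hfA⟩, -⟩ :=
    count_eq_one_iff.1 (h₁ (f₀ * g) (mul_mem (Subgroup.subset_closure (by simp)) hg))
  rw [Finset.mem_singleton] at hf
  subst hf
  refine count_eq_one_iff.2
    ⟨f, ⟨Finset.mem_singleton_self f, ?_⟩, fun f' hf' => Finset.mem_singleton.1 hf'.1⟩
  simpa [Set.mem_smul_set_iff_inv_smul_mem, smul_smul] using hfA

theorem natCast (h₁ : TilesOrbit F A 1 x) {m : ℕ} (hm : m.Coprime F.card) :
    TilesOrbit F A m x := by
  induction m using induction_on_primes with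
  | zero => exact h₁.zero ((Nat.coprime_zero_left _).1 hm)
  | one => exact_mod_cast h₁
  | prime_mul p a hp ih =>
    have hpF : ¬ p ∣ F.card := (hp.coprime_iff_not_dvd).1 (Nat.Coprime.coprime_mul_right hm)
    simpa [mul_comm] using mul_prime hp hpF h₁ (ih (Nat.Coprime.coprime_mul_left hm))

theorem of_gcd_eq_one (h₁ : TilesOrbit F A 1 x) {r : ℤ} (hr : Int.gcd r F.card = 1) :
    TilesOrbit F A r x := by
  have hm : r.natAbs.Coprime F.card := by simpa [Int.gcd] using hr
  rcases Int.natAbs_eq r with hr' | hr' <;> rw [hr']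
  · exact h₁.natCast hm
  · exact h₁.neg (h₁.natCast hm)

end TilesOrbit

end CommGroup

section Measure

variable {G X : Type*} [Group G] [MulAction G X] [MeasurableSpace X] {μ : Measure X}
  {F : Finset G} {A : Set X}

theorem ae_tilesOrbit (hact : ∀ g : G, Measure.QuasiMeasurePreserving (g • ·) μ μ)
    (htile : ∀ᵐ x ∂μ, count F A 1 x = 1) : ∀ᵐ x ∂μ, TilesOrbit F A 1 x := by
  have := (Subgroup.countable_closure F.countable_toSet).to_subtype
  have hall : ∀ g : Subgroup.closure (F : Set G), ∀ᵐ x ∂μ, count F A 1 ((g : G) • x) = 1 :=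
    fun g => (hact g).ae htile
  filter_upwards [ae_all_iff.2 hall] with x hx g hg using hx ⟨g, hg⟩

end Measure

end DilatedTiling

theorem Set.InjOn.of_ae_existsUnique_mem_smul {ι G X : Type*} [Group G] [MulAction G X]
    [MeasurableSpace X] {μ : Measure X}
    (hact : ∀ g : G, Measure.QuasiMeasurePreserving (g • ·) μ μ) {φ : ι → G} {s : Set ι}
    {A : Set X} (htile : ∀ᵐ x ∂μ, ∃! i, i ∈ s ∧ x ∈ φ i • A) (hA : 0 < μ A) : Set.InjOn φ s := by
  intro i hi j hj hij
  have hnull : μ (φ i • A) ≠ 0 := by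
    intro h0
    have := (hact (φ i)).preimage_null h0
    rw [Set.preimage_smul, inv_smul_smul] at this
    exact hA.ne' this
  obtain ⟨x, hxA, hx⟩ :=
    Measure.exists_mem_of_measure_ne_zero_of_ae hnull (ae_restrict_of_ae htile)
  exact hx.unique ⟨hi, hxA⟩ ⟨hj, hij ▸ hxA⟩

theorem measurable_dilation_lemma_general {Γ : Type*} [CommGroup Γ]
    {X : Type*} [MeasurableSpace X] (μ : Measure X) [MulAction Γ X]
    (hact : ∀ γ : Γ, MeasurePreserving (fun x => γ • x) μ μ)
    (F : Finset Γ) (A : Set X)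
    (htile : ∀ᵐ x ∂μ, ∃! f, f ∈ F ∧ x ∈ f • A)
    (r : ℤ) (hr : Int.gcd r (F.card : ℤ) = 1) :
    (∀ᵐ x ∂μ, ∃! f, f ∈ F ∧ x ∈ f ^ r • A) ∧
    (0 < μ A → Set.InjOn (fun f => f ^ r) (F : Set Γ)) := by
  have hqmp := fun γ : Γ => (hact γ).quasiMeasurePreserving
  have h₁ : ∀ᵐ x ∂μ, DilatedTiling.TilesOrbit F A 1 x := DilatedTiling.ae_tilesOrbit hqmp <|
    htile.mono fun x hx => DilatedTiling.count_eq_one_iff.2 (by simpa using hx)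
  have hdilated : ∀ᵐ x ∂μ, ∃! f, f ∈ F ∧ x ∈ f ^ r • A := h₁.mono fun x hx =>
    DilatedTiling.count_eq_one_iff.1 (hx.of_gcd_eq_one hr).count_eq
  exact ⟨hdilated, Set.InjOn.of_ae_existsUnique_mem_smul hqmp hdilated⟩

/-- **Measurable dilation lemma.**  Let an abelian group `Γ` act on a measure space `(X, μ)`
by measure-preserving transformations, and suppose the translates `f • A`, `f ∈ F`, partition
`X` up to null sets.  Then for every integer `r` coprime to `|F|`, the translates
`f^r • A`, `f ∈ F`, also partition `X` up to null sets; moreover if `A` has positive measure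
then `f ↦ f^r` is injective on `F`. -/
theorem measurable_dilation_lemma {Γ : Type*} [CommGroup Γ]
    {X : Type*} [MeasurableSpace X] (μ : Measure X) [MulAction Γ X]
    (hact : ∀ γ : Γ, MeasurePreserving (fun x => γ • x) μ μ)
    (F : Finset Γ) (A : Set X) (hA : MeasurableSet A)
    (htile : ∀ᵐ x ∂μ, ∃! f, f ∈ F ∧ x ∈ f • A)
    (r : ℤ) (hr : Int.gcd r (F.card : ℤ) = 1) :
    (∀ᵐ x ∂μ, ∃! f, f ∈ F ∧ x ∈ f ^ r • A) ∧
    (0 < μ A → Set.InjOn (fun f => f ^ r) (F : Set Γ)) :=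
  measurable_dilation_lemma_general μ hact F A htile r hr
end

section
/- Let Γ be a (discrete) abelian group acting on a measure space (X, 𝒳, μ) by measure-preserving transformations, let F ⊂ Γ be finite with |F| = n, and suppose the translates f · A, f ∈ F, of a measurable set A ⊂ X partition X up to μ-null sets. Then the inverse translates f^{−1} · A, f ∈ F, also partition X up to μ-null sets, i.e. F^{−1} ⊙ A =_ae X where F^{−1} := { f^{−1} : f ∈ F }. -/
open MeasureTheory Pointwise

lemma card_filter_eq_one_iff' {α : Type*} (s : Finset α) (P : α → Prop) [DecidablePred P] :
    (s.filter P).card = 1 ↔ ∃! a, a ∈ s ∧ P a := by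
  rw [Finset.card_eq_one]
  constructor
  · rintro ⟨a, ha⟩
    have haa : a ∈ s.filter P := by rw [ha]; exact Finset.mem_singleton_self a
    rw [Finset.mem_filter] at haa
    refine ⟨a, haa, fun b hb => ?_⟩
    have hb' : b ∈ s.filter P := Finset.mem_filter.2 hb
    rwa [ha, Finset.mem_singleton] at hb'
  · rintro ⟨a, ha, hu⟩
    exact ⟨a, Finset.eq_singleton_iff_unique_mem.2
      ⟨Finset.mem_filter.2 ha, fun b hb => hu b (Finset.mem_filter.1 hb)⟩⟩

/-- **Inverse tiling.**  Let an abelian group `Γ` act on a measure space `(X, μ)` by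
measure-preserving transformations, and suppose the translates `f • A`, `f ∈ F`, of a
measurable set `A` partition `X` up to null sets.  Then the inverse translates `f⁻¹ • A`,
`f ∈ F`, also partition `X` up to null sets. -/
theorem inverse_tiling {Γ : Type*} [CommGroup Γ]
    {X : Type*} [MeasurableSpace X] (μ : Measure X) [MulAction Γ X]
    (hact : ∀ γ : Γ, MeasurePreserving (fun x => γ • x) μ μ)
    (F : Finset Γ) (n : ℕ) (hFn : F.card = n) (A : Set X) (hA : MeasurableSet A)
    (htile : ∀ᵐ x ∂μ, ∃! f, f ∈ F ∧ x ∈ f • A) :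
    ∀ᵐ x ∂μ, ∃! f, f ∈ F ∧ x ∈ f⁻¹ • A := by
  classical
  rcases F.eq_empty_or_nonempty with rfl | ⟨g₀, hg₀⟩
  · refine htile.mono fun x hx => ?_
    obtain ⟨f, ⟨hf, _⟩, _⟩ := hx
    simp at hf
  · have hpull : ∀ γ : Γ, ∀ᵐ x ∂μ, ∃! f, f ∈ F ∧ γ • x ∈ f • A := fun γ =>
      ((hact γ).quasiMeasurePreserving.tendsto_ae).eventually htile
    have hx1 : ∀ᵐ x ∂μ, ∀ f : F, ∃! g, g ∈ F ∧ (f : Γ) • x ∈ g • A :=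
      ae_all_iff.2 fun f => hpull f
    have hx2 : ∀ᵐ x ∂μ, ∀ t : F × F × F,
        ∃! h, h ∈ F ∧ ((t.1 : Γ)⁻¹ * t.2.1 * t.2.2) • x ∈ h • A :=
      ae_all_iff.2 fun t => hpull _
    have hkey : ∀ᵐ x ∂μ, ∃! f, f ∈ F ∧ f • (g₀⁻¹ • x) ∈ A := by
      filter_upwards [hx1, hx2] with x h1 h2
      have claim1 : ∀ f ∈ F, (F.filter (fun g => (g⁻¹ * f) • x ∈ A)).card = 1 := by
        intro f hf
        rw [card_filter_eq_one_iff']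
        simpa [Set.mem_smul_set_iff_inv_smul_mem, mul_smul] using h1 ⟨f, hf⟩
      have claim2 : ∀ g ∈ F, (F.filter (fun f => (g⁻¹ * f) • x ∈ A)).card ≤ 1 := by
        intro g hg
        refine Finset.card_le_one.2 fun f₁ hf₁ f₂ hf₂ => ?_
        rw [Finset.mem_filter] at hf₁ hf₂
        obtain ⟨h₀, _, hu⟩ := h2 ⟨⟨g, hg⟩, ⟨f₁, hf₁.1⟩, ⟨f₂, hf₂.1⟩⟩
        have e₁ : (g⁻¹ * f₁ * f₂) • x ∈ f₂ • A := by
          have : (g⁻¹ * f₁ * f₂) • x = f₂ • ((g⁻¹ * f₁) • x) := by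
            rw [← mul_smul, mul_comm]
          exact this ▸ Set.smul_mem_smul_set hf₁.2
        have e₂ : (g⁻¹ * f₁ * f₂) • x ∈ f₁ • A := by
          have : (g⁻¹ * f₁ * f₂) • x = f₁ • ((g⁻¹ * f₂) • x) := by
            rw [← mul_smul, mul_comm g⁻¹ f₁, mul_assoc]
          exact this ▸ Set.smul_mem_smul_set hf₂.2
        have u₁ := hu f₁ ⟨hf₁.1, e₂⟩
        have u₂ := hu f₂ ⟨hf₂.1, e₁⟩
        rw [u₁, u₂]
      have hsum : ∑ g ∈ F, (F.filter (fun f => (g⁻¹ * f) • x ∈ A)).card = F.card := by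
        have hswap : ∑ g ∈ F, (F.filter (fun f => (g⁻¹ * f) • x ∈ A)).card
            = ∑ f ∈ F, (F.filter (fun g => (g⁻¹ * f) • x ∈ A)).card := by
          simp only [Finset.card_filter]
          exact Finset.sum_comm
        rw [hswap, Finset.sum_congr rfl claim1]
        simp
      have hall : ∀ g ∈ F, (F.filter (fun f => (g⁻¹ * f) • x ∈ A)).card = 1 := by
        have h := (Finset.sum_eq_sum_iff_of_le claim2).1 (by simpa using hsum)
        exact h
      have := hall g₀ hg₀
      rw [card_filter_eq_one_iff'] at this
      have heq : ∀ f : Γ, f • (g₀⁻¹ • x) = (g₀⁻¹ * f) • x := by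
        intro f; rw [← mul_smul, mul_comm]
      simp only [heq]
      exact this
    have hfin := ((hact g₀).quasiMeasurePreserving.tendsto_ae).eventually hkey
    refine hfin.mono fun x hx => ?_
    simp only [inv_smul_smul] at hx
    simpa [Set.mem_inv_smul_set_iff] using hx
end

section
/- Let Γ be a (discrete) abelian group acting on a measure space (X, 𝒳, μ) by measure-preserving transformations with μ(X) finite, and suppose F ⊙ A =_ae X for some finite set F ⊂ Γ and measurable A ⊂ X. Set q = |F|. Then there is a decomposition 1_X =_ae Σ_{f ∈ F} φ_f, where for each f ∈ F, φ_f : X → [0,1] is a measurable function which is f^q-invariant up to null sets (φ_f(f^q · x) = φ_f(x) for μ-almost every x), ∫_X φ_f dμ = μ(A) for all f ∈ F, and if f^q · A =_ae A then φ_f =_ae 1_{f · A}. -/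
open MeasureTheory Pointwise

open scoped ENNReal
set_option linter.unusedSectionVars false

section MeasurableTilingAux

variable {Γ : Type*} [CommGroup Γ] {X : Type*} [MeasurableSpace X]
  (μ : Measure X) [IsFiniteMeasure μ] [MulAction Γ X]
  (hact : ∀ γ : Γ, MeasurePreserving (fun x => γ • x) μ μ)
  (A : Set X) (hA : MeasurableSet A)

theorem smul_set_eq_preimage (g : Γ) : g • A = (fun x => g⁻¹ • x) ⁻¹' A := by
  ext x
  simp [Set.mem_smul_set_iff_inv_smul_mem]

include hact hA in
theorem measurableSet_smul' (g : Γ) : MeasurableSet (g • A) := by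
  rw [smul_set_eq_preimage]
  exact (hact g⁻¹).measurable hA

include hact hA in
theorem measure_smul' (g : Γ) : μ (g • A) = μ A := by
  rw [smul_set_eq_preimage]
  exact (hact g⁻¹).measure_preimage hA.nullMeasurableSet

include hact in
theorem ae_smul' {P : X → Prop} (h : ∀ᵐ x ∂μ, P x) (g : Γ) : ∀ᵐ x ∂μ, P (g • x) := by
  rw [MeasureTheory.ae_iff] at h ⊢
  exact (hact g).quasiMeasurePreserving.preimage_null h

/-- The natural-number count of translates containing `x`. -/
noncomputable def cnt (F : Finset Γ) (g : Γ → Γ) (x : X) : ℕ :=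
  ∑ f ∈ F, A.indicator (fun _ => 1) ((g f)⁻¹ • x)

include hact hA in
theorem cnt_lintegral (F : Finset Γ) (g : Γ → Γ) :
    ∫⁻ x, (cnt A F g x : ℝ≥0∞) ∂μ = F.card * μ A := by
  have : ∀ x, (cnt A F g x : ℝ≥0∞)
      = ∑ f ∈ F, ((g f) • A).indicator (1 : X → ℝ≥0∞) x := by
    intro x
    rw [cnt, Nat.cast_sum]
    refine Finset.sum_congr rfl fun f _ => ?_
    by_cases h : (g f)⁻¹ • x ∈ A <;>
      simp [h, Set.indicator_apply, Set.mem_smul_set_iff_inv_smul_mem]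
  simp only [this]
  rw [lintegral_finset_sum]
  · rw [Finset.sum_congr rfl fun f _ => ?_, Finset.sum_const, nsmul_eq_mul]
    rw [lintegral_indicator_one (measurableSet_smul' μ hact A hA (g f)),
      measure_smul' μ hact A hA (g f)]
  · exact fun f _ => measurable_one.indicator (measurableSet_smul' μ hact A hA (g f))

include hact hA in
theorem cnt_measurable (F : Finset Γ) (g : Γ → Γ) :
    Measurable (fun x => (cnt A F g x : ℝ≥0∞)) := by
  have : ∀ x, (cnt A F g x : ℝ≥0∞)
      = ∑ f ∈ F, ((g f) • A).indicator (1 : X → ℝ≥0∞) x := by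
    intro x
    rw [cnt, Nat.cast_sum]
    refine Finset.sum_congr rfl fun f _ => ?_
    by_cases h : (g f)⁻¹ • x ∈ A <;>
      simp [h, Set.indicator_apply, Set.mem_smul_set_iff_inv_smul_mem]
  simp only [this]
  exact Finset.measurable_sum _
    (fun f _ => measurable_one.indicator (measurableSet_smul' μ hact A hA (g f)))

include hact hA in
/-- If a count of translates is a.e. at least one and has total mass `μ X`, it is a.e. one. -/
theorem cnt_ae_one (F : Finset Γ) (g : Γ → Γ)
    (hge : ∀ᵐ x ∂μ, 1 ≤ cnt A F g x)
    (htot : (F.card : ℝ≥0∞) * μ A = μ Set.univ) :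
    ∀ᵐ x ∂μ, cnt A F g x = 1 := by
  set h : X → ℝ≥0∞ := fun x => (cnt A F g x : ℝ≥0∞) with hh
  have hmeas : Measurable h := cnt_measurable μ hact A hA F g
  have hge' : (fun _ => (1 : ℝ≥0∞)) ≤ᵐ[μ] h := by
    filter_upwards [hge] with x hx
    simpa [hh] using (by exact_mod_cast hx : (1 : ℝ≥0∞) ≤ (cnt A F g x : ℝ≥0∞))
  have hint : ∫⁻ x, h x ∂μ = μ Set.univ := by
    rw [hh, cnt_lintegral μ hact A hA F g, htot]
  have hone : ∫⁻ _x, (1 : ℝ≥0∞) ∂μ = μ Set.univ := by simp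
  have hsub : ∫⁻ x, (h x - 1) ∂μ = 0 := by
    rw [lintegral_sub measurable_const (by simp [measure_ne_top]) hge', hint, hone,
      tsub_self]
  have hzero : (fun x => h x - 1) =ᵐ[μ] 0 :=
    (lintegral_eq_zero_iff (hmeas.sub measurable_const)).1 hsub
  filter_upwards [hzero, hge] with x hx0 hx1
  have : h x ≤ 1 := tsub_eq_zero_iff_le.1 hx0
  have h1 : (cnt A F g x : ℝ≥0∞) ≤ 1 := this
  have := le_antisymm (by exact_mod_cast h1) hx1
  omega



variable (p : ℕ) [Fact p.Prime]

/-- Evaluation of an element of the group algebra against the indicator of `A` at a point. -/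
noncomputable def ev (x : X) (w : MonoidAlgebra (ZMod p) Γ) : ZMod p :=
  w.coeff.sum fun γ c => c * A.indicator (fun _ => (1 : ZMod p)) (γ⁻¹ • x)

theorem ev_zero (x : X) : ev A p x (0 : MonoidAlgebra (ZMod p) Γ) = 0 := Finsupp.sum_zero_index

theorem ev_add (x : X) (w v : MonoidAlgebra (ZMod p) Γ) :
    ev A p x (w + v) = ev A p x w + ev A p x v :=
  Finsupp.sum_add_index' (fun _ => zero_mul _) (fun _ _ _ => add_mul _ _ _)

theorem ev_single (x : X) (g : Γ) (c : ZMod p) :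
    ev A p x (MonoidAlgebra.single g c) = c * A.indicator (fun _ => (1 : ZMod p)) (g⁻¹ • x) :=
  Finsupp.sum_single_index (zero_mul _)

theorem ev_finset_sum {ι : Type*} (x : X) (s : Finset ι) (w : ι → MonoidAlgebra (ZMod p) Γ) :
    ev A p x (∑ i ∈ s, w i) = ∑ i ∈ s, ev A p x (w i) := by
  classical
  induction s using Finset.induction_on with
  | empty => simp [ev_zero]
  | insert _ _ h ih => rw [Finset.sum_insert h, Finset.sum_insert h, ev_add, ih]

theorem ev_single_mul (x : X) (g : Γ) (w : MonoidAlgebra (ZMod p) Γ) :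
    ev A p x (MonoidAlgebra.single g 1 * w) = ev A p (g⁻¹ • x) w := by
  induction w using MonoidAlgebra.induction_linear with
  | zero => rw [mul_zero]; simp [ev_zero]
  | add v v' hv hv' => rw [mul_add, ev_add, hv, hv', ev_add]
  | single b d =>
    rw [MonoidAlgebra.single_mul_single, one_mul, ev_single, ev_single]
    congr 2
    rw [mul_inv_rev, mul_smul]


theorem ev_sum_singles (x : X) (F : Finset Γ) (g : Γ → Γ) :
    ev A p x (∑ f ∈ F, MonoidAlgebra.single (g f) (1 : ZMod p))
      = ((cnt A F g x : ℕ) : ZMod p) := by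
  rw [ev_finset_sum, cnt, Nat.cast_sum]
  refine Finset.sum_congr rfl fun f _ => ?_
  rw [ev_single, one_mul]
  by_cases h : (g f)⁻¹ • x ∈ A <;> simp [h]

include hact in
theorem ev_pow_ae (F : Finset Γ) (r : ℕ)
    (hD : ∀ᵐ x ∂μ, cnt A F (fun f => f ^ r) x = 1) (k : ℕ) :
    ∀ᵐ x ∂μ, ev A p x ((∑ f ∈ F, MonoidAlgebra.single (f ^ r) (1 : ZMod p)) ^ (k + 1))
      = (F.card : ZMod p) ^ k := by
  induction k with
  | zero =>
    filter_upwards [hD] with x hx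
    rw [pow_one, ev_sum_singles, hx]
    simp
  | succ k ih =>
    have hih : ∀ᵐ x ∂μ, ∀ f ∈ F,
        ev A p ((f ^ r)⁻¹ • x)
          ((∑ f ∈ F, MonoidAlgebra.single (f ^ r) (1 : ZMod p)) ^ (k + 1))
          = (F.card : ZMod p) ^ k := by
      rw [Filter.eventually_all_finset F]
      intro f _
      exact ae_smul' μ hact ih ((f ^ r)⁻¹)
    filter_upwards [hih] with x hx
    rw [pow_succ']
    rw [Finset.sum_mul, ev_finset_sum]
    rw [Finset.sum_congr rfl fun f hf => by rw [ev_single_mul, hx f hf]]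
    rw [Finset.sum_const, nsmul_eq_mul, pow_succ']

theorem frobenius_sum_singles (F : Finset Γ) (r : ℕ) :
    (∑ f ∈ F, MonoidAlgebra.single (f ^ r) (1 : ZMod p)) ^ p
      = ∑ f ∈ F, MonoidAlgebra.single (f ^ (r * p)) (1 : ZMod p) := by
  haveI : CharP (MonoidAlgebra (ZMod p) Γ) p :=
    charP_of_injective_ringHom
      (f := (MonoidAlgebra.singleOneRingHom : ZMod p →+* MonoidAlgebra (ZMod p) Γ))
      (fun a b hab => by
        simpa using congrArg (fun w => (w : MonoidAlgebra (ZMod p) Γ).coeff (1 : Γ)) hab) p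
  rw [sum_pow_char]
  refine Finset.sum_congr rfl fun f _ => ?_
  rw [MonoidAlgebra.single_pow, one_pow, ← pow_mul]

include hact hA in
theorem dilation_step (F : Finset Γ) (r : ℕ) (hpq : ¬ p ∣ F.card)
    (hD : ∀ᵐ x ∂μ, cnt A F (fun f => f ^ r) x = 1) :
    ∀ᵐ x ∂μ, cnt A F (fun f => f ^ (r * p)) x = 1 := by
  have hp : p.Prime := Fact.out
  -- a.e. lower bound via the Frobenius argument
  have hge : ∀ᵐ x ∂μ, 1 ≤ cnt A F (fun f => f ^ (r * p)) x := by
    have hev := ev_pow_ae μ hact A p F r hD (p - 1)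
    rw [Nat.sub_add_cancel hp.one_lt.le] at hev
    filter_upwards [hev] with x hx
    rw [frobenius_sum_singles, ev_sum_singles] at hx
    by_contra hlt
    have h0 : cnt A F (fun f => f ^ (r * p)) x = 0 := by omega
    rw [h0, Nat.cast_zero] at hx
    have hcard : (F.card : ZMod p) ≠ 0 := by
      rwa [Ne, ZMod.natCast_eq_zero_iff]
    exact (pow_ne_zero _ hcard) hx.symm
  -- total mass
  have htot : (F.card : ℝ≥0∞) * μ A = μ Set.univ := by
    have h1 : ∫⁻ x, (cnt A F (fun f => f ^ r) x : ℝ≥0∞) ∂μ = F.card * μ A :=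
      cnt_lintegral μ hact A hA F _
    have h2 : ∫⁻ x, (cnt A F (fun f => f ^ r) x : ℝ≥0∞) ∂μ = μ Set.univ := by
      have : (fun x => (cnt A F (fun f => f ^ r) x : ℝ≥0∞)) =ᵐ[μ] fun _ => 1 := by
        filter_upwards [hD] with x hx
        rw [hx, Nat.cast_one]
      rw [lintegral_congr_ae this]
      simp
    rw [← h1, h2]
  exact cnt_ae_one μ hact A hA F _ hge htot

include hact hA in
theorem dilation (F : Finset Γ)
    (hD1 : ∀ᵐ x ∂μ, cnt A F (fun f => f ^ 1) x = 1) :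
    ∀ m, m ≠ 0 → Nat.Coprime m F.card →
      ∀ᵐ x ∂μ, cnt A F (fun f => f ^ m) x = 1 := by
  intro m
  induction m using Nat.strong_induction_on with
  | _ m IH =>
    intro hm hcop
    rcases eq_or_ne m 1 with rfl | hm1
    · exact hD1
    · have hp : m.minFac.Prime := Nat.minFac_prime hm1
      haveI : Fact m.minFac.Prime := ⟨hp⟩
      obtain ⟨r, hr⟩ := Nat.minFac_dvd m
      have hr0 : r ≠ 0 := by rintro rfl; simp at hr; exact hm hr
      have hrm : r < m := by
        rw [hr]
        have := hp.two_le
        calc r = 1 * r := (one_mul r).symm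
        _ < m.minFac * r := by
          exact (Nat.mul_lt_mul_right (Nat.pos_of_ne_zero hr0)).mpr (by omega)
      have hrcop : Nat.Coprime r F.card :=
        Nat.Coprime.coprime_dvd_left ⟨m.minFac, hr.trans (mul_comm _ _)⟩ hcop
      have hpq : ¬ m.minFac ∣ F.card := by
        intro hdvd
        have : m.minFac ∣ Nat.gcd m F.card := Nat.dvd_gcd (Nat.minFac_dvd m) hdvd
        rw [hcop] at this
        exact hp.one_lt.ne' (Nat.dvd_one.mp this)
      have hstep := dilation_step μ hact A hA m.minFac F r hpq (IH r hrm hr0 hrcop)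
      rw [hr, mul_comm]
      exact hstep

theorem sum_indicator_eq_cnt (F : Finset Γ) (g : Γ → Γ) (x : X) :
    ∑ f ∈ F, ((g f) • A).indicator (fun _ => (1 : ℝ)) x = ((cnt A F g x : ℕ) : ℝ) := by
  rw [cnt, Nat.cast_sum]
  refine Finset.sum_congr rfl fun f _ => ?_
  by_cases h : (g f)⁻¹ • x ∈ A <;>
    simp [h, Set.indicator_apply, Set.mem_smul_set_iff_inv_smul_mem]

theorem indicator_comp_smul (g : Γ) (B : Set X) :
    (fun x => B.indicator (fun _ => (1 : ℝ)) (g⁻¹ • x)) = (g • B).indicator (fun _ => (1 : ℝ)) := by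
  funext x
  by_cases h : g⁻¹ • x ∈ B <;>
    simp [h, Set.indicator_apply, Set.mem_smul_set_iff_inv_smul_mem]

theorem Lp_coeFn_sum {ι : Type*} (s : Finset ι) (g : ι → Lp ℝ 2 μ) :
    ⇑(∑ i ∈ s, g i) =ᵐ[μ] fun x => ∑ i ∈ s, g i x := by
  classical
  induction s using Finset.induction_on with
  | empty => simp only [Finset.sum_empty]; exact Lp.coeFn_zero (E := ℝ) (p := 2) (μ := μ)
  | insert _ _ h ih =>
    rename_i a s
    rw [Finset.sum_insert h]
    filter_upwards [Lp.coeFn_add (g a) (∑ i ∈ s, g i), ih] with x hx hx2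
    rw [hx]
    simp only [Pi.add_apply, hx2]
    rw [Finset.sum_insert h]


end MeasurableTilingAux

set_option maxHeartbeats 1000000 in
set_option synthInstance.maxHeartbeats 400000 in
/-- **Structure theorem for abelian measurable tilings.**  Let an abelian group `Γ` act on a
finite measure space `(X, μ)` by measure-preserving transformations, and suppose the
translates `f • A`, `f ∈ F`, partition `X` up to null sets.  With `q = |F|`, there are
measurable functions `φ_f : X → [0,1]`, each `f^q`-invariant up to null sets, with
`∑_{f ∈ F} φ_f = 1` a.e., `∫ φ_f dμ = μ(A)` for all `f ∈ F`, and `φ_f = 1_{f • A}` a.e.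
whenever `f^q • A = A` up to null sets. -/
theorem measurable_structure_theorem {Γ : Type*} [CommGroup Γ]
    {X : Type*} [MeasurableSpace X] (μ : Measure X) [IsFiniteMeasure μ] [MulAction Γ X]
    (hact : ∀ γ : Γ, MeasurePreserving (fun x => γ • x) μ μ)
    (F : Finset Γ) (A : Set X) (hA : MeasurableSet A)
    (htile : ∀ᵐ x ∂μ, ∃! f, f ∈ F ∧ x ∈ f • A)
    (q : ℕ) (hq : q = F.card) :
    ∃ φ : Γ → X → ℝ,
      (∀ f ∈ F, Measurable (φ f)) ∧
      (∀ f ∈ F, ∀ x, φ f x ∈ Set.Icc (0 : ℝ) 1) ∧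
      (∀ f ∈ F, ∀ᵐ x ∂μ, φ f (f ^ q • x) = φ f x) ∧
      (∀ f ∈ F, ∫ x, φ f x ∂μ = (μ A).toReal) ∧
      (∀ f ∈ F, (f ^ q • A : Set X) =ᵐ[μ] A →
        φ f =ᵐ[μ] Set.indicator (f • A) (fun _ => (1 : ℝ))) ∧
      (∀ᵐ x ∂μ, ∑ f ∈ F, φ f x = 1) := by
  classical
  -- Step 1: the base tiling, as a counting statement.
  have hD1 : ∀ᵐ x ∂μ, cnt A F (fun f => f ^ 1) x = 1 := by
    filter_upwards [htile] with x hx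
    obtain ⟨f₀, ⟨hf₀F, hf₀⟩, huniq⟩ := hx
    have hsingle : F.filter (fun f => (f ^ 1)⁻¹ • x ∈ A) = {f₀} := by
      apply Finset.eq_singleton_iff_unique_mem.2
      constructor
      · exact Finset.mem_filter.2 ⟨hf₀F, by
          simpa [Set.mem_smul_set_iff_inv_smul_mem] using hf₀⟩
      · intro f hf
        rcases Finset.mem_filter.1 hf with ⟨hfF, hfx⟩
        exact huniq f ⟨hfF, by simpa [Set.mem_smul_set_iff_inv_smul_mem] using hfx⟩
    have hcnt : cnt A F (fun f => f ^ 1) x = (F.filter (fun f => (f ^ 1)⁻¹ • x ∈ A)).card := by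
      rw [cnt, Finset.card_filter]
      refine Finset.sum_congr rfl fun f _ => ?_
      by_cases h : (f ^ 1)⁻¹ • x ∈ A <;> simp [h, Set.indicator_apply]
    rw [hcnt, hsingle, Finset.card_singleton]
  -- Step 2: real-valued dilated tilings, for all exponents `1 + q * n`.
  have hDR : ∀ n : ℕ, ∀ᵐ x ∂μ,
      ∑ f ∈ F, ((f ^ (1 + q * n)) • A).indicator (fun _ => (1 : ℝ)) x = 1 := by
    intro n
    have hcop : Nat.Coprime (1 + q * n) F.card := by
      subst hq
      simpa [Nat.add_mul_mod_self_left] using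
        (Nat.coprime_one_left F.card).add_mul_right_left n
    have hD := dilation μ hact A hA F hD1 (1 + q * n) (by omega) hcop
    filter_upwards [hD] with x hx
    rw [sum_indicator_eq_cnt, hx, Nat.cast_one]
  -- Step 3: the Koopman operators and their Birkhoff averages.
  haveI : Fact ((1 : ℝ≥0∞) ≤ 2) := ⟨one_le_two⟩
  let T : Γ → Lp ℝ 2 μ →L[ℝ] Lp ℝ 2 μ := fun f =>
    (Lp.compMeasurePreservingₗᵢ (E := ℝ) (p := 2) ℝ
      (fun x => (f ^ q)⁻¹ • x) (hact ((f ^ q)⁻¹))).toContinuousLinearMap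
  let ξ : Γ → Lp ℝ 2 μ := fun f =>
    indicatorConstLp 2 (measurableSet_smul' μ hact A hA f) (measure_ne_top μ _) (1 : ℝ)
  let c : Γ → Lp ℝ 2 μ := fun f =>
    ((LinearMap.eqLocus (T f : Lp ℝ 2 μ →ₗ[ℝ] Lp ℝ 2 μ) ((1 : Lp ℝ 2 μ →L[ℝ] Lp ℝ 2 μ) : Lp ℝ 2 μ →ₗ[ℝ] Lp ℝ 2 μ)).orthogonalProjectionOnto (ξ f) : Lp ℝ 2 μ)
  have hlim : ∀ f : Γ,
      Filter.Tendsto (fun N => birkhoffAverage ℝ (T f) _root_.id N (ξ f))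
        Filter.atTop (nhds (c f)) := fun f =>
    (T f).tendsto_birkhoffAverage_orthogonalProjection
      (LinearIsometry.norm_toContinuousLinearMap_le _) (ξ f)
  -- The iterates of the Koopman operator on ξ are indicators of dilated translates.
  have hTapp : ∀ (f : Γ) (g : Lp ℝ 2 μ),
      T f g = Lp.compMeasurePreserving _ (hact ((f ^ q)⁻¹)) g := fun f g => rfl
  have hTiter : ∀ (f : Γ) (n : ℕ),
      ⇑((⇑(T f))^[n] (ξ f)) =ᵐ[μ] ((f ^ (1 + q * n)) • A).indicator (fun _ => (1 : ℝ)) := by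
    intro f n
    induction n with
    | zero =>
      simpa using (indicatorConstLp_coeFn (p := 2)
        (hs := measurableSet_smul' μ hact A hA f) (hμs := measure_ne_top μ _) (c := (1:ℝ)))
    | succ n ih =>
      rw [Function.iterate_succ_apply']
      have h1 : ⇑(T f ((⇑(T f))^[n] (ξ f))) =ᵐ[μ]
          (⇑((⇑(T f))^[n] (ξ f))) ∘ (fun x => (f ^ q)⁻¹ • x) := by
        rw [hTapp]
        exact Lp.coeFn_compMeasurePreserving _ _
      have h2 : (⇑((⇑(T f))^[n] (ξ f))) ∘ (fun x => (f ^ q)⁻¹ • x) =ᵐ[μ]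
          (((f ^ (1 + q * n)) • A).indicator (fun _ => (1 : ℝ))) ∘ (fun x => (f ^ q)⁻¹ • x) :=
        MeasureTheory.ae_eq_comp (hact ((f ^ q)⁻¹)).aemeasurable
          (by rw [(hact ((f ^ q)⁻¹)).map_eq]; exact ih)
      have h3 : (((f ^ (1 + q * n)) • A).indicator (fun _ => (1 : ℝ)))
            ∘ (fun x => (f ^ q)⁻¹ • x)
          = ((f ^ (1 + q * (n + 1))) • A).indicator (fun _ => (1 : ℝ)) := by
        have := indicator_comp_smul (f ^ q) ((f ^ (1 + q * n)) • A)
        rw [smul_smul, ← pow_add, (by ring : q + (1 + q * n) = 1 + q * (n + 1))] at this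
        exact this
      exact h1.trans (h2.trans (Filter.EventuallyEq.of_eq h3))
  -- coeFn description of the Birkhoff averages.
  have hbA : ∀ (f : Γ) (N : ℕ),
      ⇑(birkhoffAverage ℝ (T f) _root_.id N (ξ f)) =ᵐ[μ]
        fun x => (N : ℝ)⁻¹ • ∑ n ∈ Finset.range N,
          ((f ^ (1 + q * n)) • A).indicator (fun _ => (1 : ℝ)) x := by
    intro f N
    have h0 : birkhoffAverage ℝ (⇑(T f)) _root_.id N (ξ f)
        = (N : ℝ)⁻¹ • ∑ n ∈ Finset.range N, (⇑(T f))^[n] (ξ f) := by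
      simp [birkhoffAverage, birkhoffSum]
    rw [h0]
    have h1 := Lp.coeFn_smul ((N : ℝ)⁻¹) (∑ n ∈ Finset.range N, (⇑(T f))^[n] (ξ f))
    have h2 := Lp_coeFn_sum μ (Finset.range N) (fun n => (⇑(T f))^[n] (ξ f))
    have h3 : ∀ᵐ x ∂μ, ∀ n ∈ Finset.range N,
        ((⇑(T f))^[n] (ξ f) : X → ℝ) x
          = ((f ^ (1 + q * n)) • A).indicator (fun _ => (1 : ℝ)) x := by
      rw [Filter.eventually_all_finset]
      intro n _
      exact hTiter f n
    filter_upwards [h1, h2, h3] with x hx1 hx2 hx3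
    rw [hx1]
    simp only [Pi.smul_apply, hx2]
    rw [Finset.sum_congr rfl hx3]
  -- Step 4: the sum of the Birkhoff averages over `F` is the constant function 1.
  let oneL : Lp ℝ 2 μ := (memLp_const (1 : ℝ)).toLp (fun _ => (1 : ℝ))
  have honeL : ⇑oneL =ᵐ[μ] fun _ => (1 : ℝ) := MemLp.coeFn_toLp _
  have hsum_one : ∀ N : ℕ, 1 ≤ N →
      (∑ f ∈ F, birkhoffAverage ℝ (T f) _root_.id N (ξ f)) = oneL := by
    intro N hN
    apply Lp.ext (p := (2 : ℝ≥0∞))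
    have h1 := Lp_coeFn_sum μ F (fun f => birkhoffAverage ℝ (T f) _root_.id N (ξ f))
    have h2 : ∀ᵐ x ∂μ, ∀ f ∈ F,
        ⇑(birkhoffAverage ℝ (T f) _root_.id N (ξ f)) x
          = (N : ℝ)⁻¹ • ∑ n ∈ Finset.range N,
              ((f ^ (1 + q * n)) • A).indicator (fun _ => (1 : ℝ)) x := by
      rw [Filter.eventually_all_finset]
      intro f _
      exact hbA f N
    have h3 : ∀ᵐ x ∂μ, ∀ n ∈ Finset.range N,
        ∑ f ∈ F, ((f ^ (1 + q * n)) • A).indicator (fun _ => (1 : ℝ)) x = 1 := by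
      rw [Filter.eventually_all_finset]
      intro n _
      exact hDR n
    filter_upwards [h1, h2, h3, honeL] with x hx1 hx2 hx3 hx4
    rw [hx1, hx4]
    rw [Finset.sum_congr rfl hx2, ← Finset.smul_sum, Finset.sum_comm,
      Finset.sum_congr rfl hx3]
    simp only [Finset.sum_const, Finset.card_range, nsmul_eq_mul, mul_one, smul_eq_mul]
    rw [inv_mul_cancel₀ (by positivity : (N : ℝ) ≠ 0)]
  -- Step 5: hence the sum of the projections is the constant function 1.
  have hcsum : (∑ f ∈ F, c f) = oneL := by
    have h1 : Filter.Tendsto (fun N => ∑ f ∈ F, birkhoffAverage ℝ (T f) _root_.id N (ξ f))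
        Filter.atTop (nhds (∑ f ∈ F, c f)) :=
      tendsto_finset_sum F fun f _ => hlim f
    refine tendsto_nhds_unique h1 (Filter.Tendsto.congr' ?_ tendsto_const_nhds)
    filter_upwards [Filter.eventually_ge_atTop 1] with N hN
    exact (hsum_one N hN).symm
  -- Step 6: a.e. bounds for the projections.
  have hbd : ∀ f : Γ, ∀ᵐ x ∂μ, ⇑(c f) x ∈ Set.Icc (0 : ℝ) 1 := by
    intro f
    have hconv := hlim f
    rw [Lp.tendsto_Lp_iff_tendsto_eLpNorm'] at hconv
    have htm : TendstoInMeasure μ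
        (fun N => ⇑(birkhoffAverage ℝ (T f) _root_.id N (ξ f))) Filter.atTop ⇑(c f) :=
      tendstoInMeasure_of_tendsto_eLpNorm (by norm_num)
        (fun n => Lp.aestronglyMeasurable _) (Lp.aestronglyMeasurable _) hconv
    obtain ⟨ns, hns, hae⟩ := htm.exists_seq_tendsto_ae
    have hball : ∀ᵐ x ∂μ, ∀ N : ℕ,
        ⇑(birkhoffAverage ℝ (T f) _root_.id N (ξ f)) x
          = (N : ℝ)⁻¹ • ∑ n ∈ Finset.range N,
              ((f ^ (1 + q * n)) • A).indicator (fun _ => (1 : ℝ)) x :=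
      MeasureTheory.ae_all_iff.2 fun N => hbA f N
    filter_upwards [hae, hball] with x hx hex
    refine isClosed_Icc.mem_of_tendsto hx ?_
    filter_upwards [Filter.eventually_ge_atTop 1] with i hi
    rw [hex (ns i)]
    have hNi : 1 ≤ ns i := le_trans hi (hns.le_apply)
    constructor
    · apply smul_nonneg (by positivity)
      exact Finset.sum_nonneg fun n _ => Set.indicator_nonneg (fun _ _ => zero_le_one) _
    · have hle : ∑ n ∈ Finset.range (ns i),
          ((f ^ (1 + q * n)) • A).indicator (fun _ => (1 : ℝ)) x ≤ (ns i : ℝ) := by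
        calc ∑ n ∈ Finset.range (ns i),
            ((f ^ (1 + q * n)) • A).indicator (fun _ => (1 : ℝ)) x
            ≤ ∑ _n ∈ Finset.range (ns i), (1 : ℝ) :=
              Finset.sum_le_sum fun n _ => Set.indicator_le_self' (fun _ _ => zero_le_one) x
              |>.trans (by by_cases hmem : x ∈ (f ^ (1 + q * n)) • A <;>
                simp [hmem, Set.indicator_apply])
          _ = (ns i : ℝ) := by simp
      rw [smul_eq_mul]
      rw [inv_mul_le_iff₀ (by positivity), mul_one]
      exact hle
  -- Step 7: integrals of the projections.
  have hinner : ∀ g : Lp ℝ 2 μ, (inner ℝ g oneL : ℝ) = ∫ x, g x ∂μ := by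
    intro g
    rw [MeasureTheory.L2.inner_def]
    apply integral_congr_ae
    filter_upwards [honeL] with x hx
    rw [hx]
    simp [RCLike.inner_apply]
  have hinteg : ∀ f : Γ, ∫ x, ⇑(c f) x ∂μ = (μ A).toReal := by
    intro f
    have h1 : Filter.Tendsto
        (fun N => (inner ℝ (birkhoffAverage ℝ (T f) _root_.id N (ξ f)) oneL : ℝ))
        Filter.atTop (nhds (inner ℝ (c f) oneL : ℝ)) :=
      (hlim f).inner tendsto_const_nhds
    have h2 : ∀ N : ℕ, 1 ≤ N →
        (inner ℝ (birkhoffAverage ℝ (T f) _root_.id N (ξ f)) oneL : ℝ) = (μ A).toReal := by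
      intro N hN
      rw [hinner]
      rw [integral_congr_ae (hbA f N)]
      have hint : ∀ n : ℕ, Integrable
          (fun x => ((f ^ (1 + q * n)) • A).indicator (fun _ => (1 : ℝ)) x) μ :=
        fun n => (integrable_const (1 : ℝ)).indicator
          (measurableSet_smul' μ hact A hA _)
      rw [integral_smul, integral_finset_sum _ fun n _ => hint n]
      have : ∀ n ∈ Finset.range N,
          ∫ x, ((f ^ (1 + q * n)) • A).indicator (fun _ => (1 : ℝ)) x ∂μ
            = (μ A).toReal := by
        intro n _
        rw [integral_indicator_const (1 : ℝ) (measurableSet_smul' μ hact A hA _)]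
        rw [measureReal_def, measure_smul' μ hact A hA]
        simp
      rw [Finset.sum_congr rfl this]
      simp only [Finset.sum_const, Finset.card_range, nsmul_eq_mul, smul_eq_mul]
      rw [← mul_assoc, inv_mul_cancel₀ (by positivity : (N : ℝ) ≠ 0), one_mul]
    have h3 : (inner ℝ (c f) oneL : ℝ) = (μ A).toReal := by
      refine tendsto_nhds_unique h1 (Filter.Tendsto.congr' ?_ tendsto_const_nhds)
      filter_upwards [Filter.eventually_ge_atTop 1] with N hN
      exact (h2 N hN).symm
    rw [← hinner]
    exact h3
  -- Step 8: the invariant case.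
  have hfixed : ∀ f : Γ, (f ^ q • A : Set X) =ᵐ[μ] A → c f = ξ f := by
    intro f hinv
    have hTξ : T f (ξ f) = ξ f := by
      apply Lp.ext (p := (2 : ℝ≥0∞))
      have h1 : ⇑(T f (ξ f)) =ᵐ[μ] (⇑(ξ f)) ∘ (fun x => (f ^ q)⁻¹ • x) := by
        rw [hTapp]
        exact Lp.coeFn_compMeasurePreserving _ _
      have h2 : (⇑(ξ f)) ∘ (fun x => (f ^ q)⁻¹ • x) =ᵐ[μ]
          ((f • A).indicator (fun _ => (1 : ℝ))) ∘ (fun x => (f ^ q)⁻¹ • x) :=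
        MeasureTheory.ae_eq_comp (hact ((f ^ q)⁻¹)).aemeasurable
          (by rw [(hact ((f ^ q)⁻¹)).map_eq]
              exact indicatorConstLp_coeFn)
      have h3 : ((f • A).indicator (fun _ => (1 : ℝ))) ∘ (fun x => (f ^ q)⁻¹ • x)
          = ((f ^ q • (f • A)).indicator (fun _ => (1 : ℝ))) :=
        indicator_comp_smul (f ^ q) (f • A)
      have h4 : ((f ^ q • (f • A)).indicator (fun _ : X => (1 : ℝ))) =ᵐ[μ]
          ((f • A).indicator (fun _ => (1 : ℝ))) := by
        have hinv' : ∀ᵐ y ∂μ, (y ∈ f ^ q • A) = (y ∈ A) := hinv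
        have h5 : ∀ᵐ x ∂μ, (f⁻¹ • x ∈ (f ^ q • A)) = (f⁻¹ • x ∈ A) :=
          ae_smul' μ hact hinv' f⁻¹
        filter_upwards [h5] with x hx
        have hmem : (x ∈ f ^ q • (f • A)) = (x ∈ f • A) := by
          rw [smul_smul, mul_comm, ← smul_smul,
            Set.mem_smul_set_iff_inv_smul_mem, Set.mem_smul_set_iff_inv_smul_mem (a := f), hx]
        by_cases hm : x ∈ f ^ q • (f • A)
        · rw [Set.indicator_of_mem hm, Set.indicator_of_mem (by rw [← hmem]; exact hm)]
        · rw [Set.indicator_of_notMem hm,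
            Set.indicator_of_notMem (by rw [← hmem]; exact hm)]
      exact (h1.trans ((h2.trans (Filter.EventuallyEq.of_eq h3)).trans h4)).trans
        indicatorConstLp_coeFn.symm
    have hmem : ξ f ∈ LinearMap.eqLocus (T f : Lp ℝ 2 μ →ₗ[ℝ] Lp ℝ 2 μ) ((1 : Lp ℝ 2 μ →L[ℝ] Lp ℝ 2 μ) : Lp ℝ 2 μ →ₗ[ℝ] Lp ℝ 2 μ) :=
      LinearMap.mem_eqLocus.mpr (by exact hTξ)
    exact Submodule.starProjection_eq_self_iff.2 hmem
  -- Step 9: define the functions φ and verify all the properties.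
  let m : Γ → X → ℝ := fun f => (Lp.aestronglyMeasurable (c f)).mk ⇑(c f)
  let φ : Γ → X → ℝ := fun f x => max 0 (min (m f x) 1)
  have hφc : ∀ f : Γ, φ f =ᵐ[μ] ⇑(c f) := by
    intro f
    filter_upwards [(Lp.aestronglyMeasurable (c f)).ae_eq_mk, hbd f] with x hx hxb
    show max 0 (min (m f x) 1) = ⇑(c f) x
    rw [show m f x = ⇑(c f) x from hx.symm, min_eq_left hxb.2, max_eq_right hxb.1]
  refine ⟨φ, ?_, ?_, ?_, ?_, ?_, ?_⟩
  · intro f _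
    exact measurable_const.max
      ((((Lp.aestronglyMeasurable (c f)).stronglyMeasurable_mk).measurable).min
        measurable_const)
  · intro f _ x
    exact ⟨le_max_left 0 _, max_le zero_le_one (min_le_right _ _)⟩
  · intro f _
    have hTc : T f (c f) = c f := by
      have hmem := ((LinearMap.eqLocus (T f : Lp ℝ 2 μ →ₗ[ℝ] Lp ℝ 2 μ) ((1 : Lp ℝ 2 μ →L[ℝ] Lp ℝ 2 μ) : Lp ℝ 2 μ →ₗ[ℝ] Lp ℝ 2 μ)).orthogonalProjectionOnto (ξ f)).2
      rw [LinearMap.mem_eqLocus] at hmem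
      exact hmem
    have hc1 : ⇑(c f) =ᵐ[μ] (⇑(c f)) ∘ (fun x => (f ^ q)⁻¹ • x) := by
      have h1 : ⇑(T f (c f)) =ᵐ[μ] (⇑(c f)) ∘ (fun x => (f ^ q)⁻¹ • x) := by
        rw [hTapp]
        exact Lp.coeFn_compMeasurePreserving _ _
      rw [hTc] at h1
      exact h1
    have hφ1 : ∀ᵐ x ∂μ, φ f ((f ^ q)⁻¹ • x) = φ f x := by
      have h2 : (φ f) ∘ (fun x => (f ^ q)⁻¹ • x) =ᵐ[μ]
          (⇑(c f)) ∘ (fun x => (f ^ q)⁻¹ • x) :=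
        MeasureTheory.ae_eq_comp (hact ((f ^ q)⁻¹)).aemeasurable
          (by rw [(hact ((f ^ q)⁻¹)).map_eq]; exact hφc f)
      have h3 := (h2.trans hc1.symm).trans (hφc f).symm
      filter_upwards [h3] with x hx
      exact hx
    have h4 := ae_smul' μ hact hφ1 (f ^ q)
    filter_upwards [h4] with x hx
    rw [inv_smul_smul] at hx
    exact hx.symm
  · intro f _
    rw [integral_congr_ae (hφc f)]
    exact hinteg f
  · intro f _ hinv
    refine (hφc f).trans ?_
    rw [hfixed f hinv]
    exact indicatorConstLp_coeFn
  · have h1 := Lp_coeFn_sum μ F c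
    rw [hcsum] at h1
    have h2 : ∀ᵐ x ∂μ, ∀ f ∈ F, φ f x = ⇑(c f) x := by
      rw [Filter.eventually_all_finset]
      intro f _
      exact hφc f
    filter_upwards [h1, h2, honeL] with x hx1 hx2 hx3
    rw [Finset.sum_congr rfl fun f hf => hx2 f hf, ← hx1, hx3]
end

section
/- Let F be a finite multiset in ℝ, let [a,b] ⊂ ℝ be a finite interval with a < b, and let ψ : ℝ → [0,∞) be a measurable function whose support is a connected set. If 1_F * ψ =_ae 1_{[a,b]} (i.e. Σ_{f ∈ F, counted with multiplicity} ψ(x − f) = 1_{[a,b]}(x) for Lebesgue-almost every x ∈ ℝ), then there exist a natural number m ≥ 1 and real numbers c < c′ such that m·ψ =_ae 1_{[c,c′]}. -/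
/-!
The support of `ψ` is an interval; the tiling forces it to be bounded and of positive length,
with closure `[α, β]` say. Let `f₁` and `f_N` be the least and the greatest element of `F`, of
multiplicities `m` and `m_N`. Just to the right of `f₁ + α` only the `f₁`-translates are present,
so `m ψ = 1` just to the right of `α`; likewise `m_N ψ = 1` just to the left of `β`. As
`m_f ψ ≤ 1` for every `f`, comparing the two ends gives `m = m_N`. Now no other element `g` of
`F` can lie within `β - α` of `f₁`: just to the left of `f₁ + β`, the `g`-translate would add a
positive amount to `m ψ(· - f₁) = 1`. Hence the `f₁`-translates are alone on `f₁ + (α, β)`, and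
`m ψ = 1` on `(α, β)`.
-/

open MeasureTheory Set

theorem Metric.exists_pos_forall_ne_le_dist {X : Type*} [MetricSpace X] (s : Finset X) (y : X) :
    ∃ δ > 0, ∀ x ∈ s, x ≠ y → δ ≤ dist x y := by
  classical
  obtain ⟨δ, hδ, hball⟩ :=
    Metric.isOpen_iff.1 (s.erase y).finite_toSet.isClosed.isOpen_compl y (by simp)
  refine ⟨δ, hδ, fun x hx hxy => not_lt.1 fun hlt => ?_⟩
  exact hball (Metric.mem_ball.2 hlt) (Finset.mem_coe.2 (Finset.mem_erase.2 ⟨hxy, hx⟩))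

theorem Multiset.sum_map_eq_count_nsmul_add {ι M : Type*} [DecidableEq ι] [AddCommMonoid M]
    (m : Multiset ι) (f : ι → M) (i : ι) :
    (m.map f).sum = m.count i • f i + ((m.filter (· ≠ i)).map f).sum := by
  conv_lhs => rw [← m.filter_add_not (· = i)]
  rw [map_add, sum_add, filter_eq', map_replicate, sum_replicate]

theorem exists_mem_Ioo_of_ae {P : ℝ → Prop} (h : ∀ᵐ x, P x) {p q : ℝ} (hpq : p < q) :
    ∃ x ∈ Ioo p q, P x :=
  Measure.exists_mem_of_measure_ne_zero_of_ae (by simp [hpq]) (ae_restrict_of_ae h)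

theorem Set.OrdConnected.bddBelow_bddAbove_of_ae_subset {S : Set ℝ} (hS : S.OrdConnected)
    {p q : ℝ} (h : ∀ᵐ x, x ∈ S → x ∈ Icc p q) : BddBelow S ∧ BddAbove S := by
  constructor
  · by_contra hS'
    obtain ⟨s₁, hs₁, hs₁p⟩ := not_bddBelow_iff.1 hS' p
    obtain ⟨s₂, hs₂, hs₂s₁⟩ := not_bddBelow_iff.1 hS' s₁
    obtain ⟨x, hx, hxpq⟩ := exists_mem_Ioo_of_ae h hs₂s₁
    linarith [(hxpq (hS.out hs₂ hs₁ (Ioo_subset_Icc_self hx))).1, hx.2]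
  · by_contra hS'
    obtain ⟨s₁, hs₁, hqs₁⟩ := not_bddAbove_iff.1 hS' q
    obtain ⟨s₂, hs₂, hs₁s₂⟩ := not_bddAbove_iff.1 hS' s₁
    obtain ⟨x, hx, hxpq⟩ := exists_mem_Ioo_of_ae h hs₁s₂
    linarith [(hxpq (hS.out hs₁ hs₂ (Ioo_subset_Icc_self hx))).2, hx.1]

theorem ae_eq_indicator_Icc_of_ae_Ioo {g : ℝ → ℝ} {α β : ℝ}
    (h₁ : ∀ᵐ t, t ∈ Ioo α β → g t = 1) (h₀ : ∀ t ∉ Icc α β, g t = 0) :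
    ∀ᵐ x, g x = (Icc α β).indicator 1 x := by
  filter_upwards [h₁, Ioo_ae_eq_Icc (a := α) (b := β)] with x hx hIoo
  by_cases hIcc : x ∈ Icc α β
  · rw [indicator_of_mem hIcc]
    exact hx (hIoo.mpr hIcc)
  · rw [indicator_of_notMem hIcc, h₀ x hIcc]

theorem le_of_ae_mul_eq_one_of_ae_mul_le_one {ψ : ℝ → ℝ} {m n : ℕ} {p q : ℝ} (hpq : p < q)
    (hm : ∀ᵐ t, t ∈ Ioo p q → m * ψ t = 1) (hn : ∀ᵐ t, n * ψ t ≤ 1) : n ≤ m := by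
  obtain ⟨t, ht, hmt, hnt⟩ := exists_mem_Ioo_of_ae (hm.and hn) hpq
  have hψ : 0 < ψ t := pos_of_mul_pos_right (hmt ht ▸ one_pos) m.cast_nonneg
  exact_mod_cast le_of_mul_le_mul_right (hnt.trans (hmt ht).ge) hψ

/-- The convolution `1_F * ψ`. -/
noncomputable def translateSum (F : Multiset ℝ) (ψ : ℝ → ℝ) (x : ℝ) : ℝ :=
  (F.map fun f => ψ (x - f)).sum

section translateSum

variable {F : Multiset ℝ} {ψ : ℝ → ℝ}

theorem translateSum_add_eq_count_mul {f t : ℝ}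
    (h : ∀ g ∈ F, g ≠ f → ψ (t + f - g) = 0) :
    translateSum F ψ (t + f) = F.count f * ψ t := by
  rw [translateSum, Multiset.sum_map_eq_nsmul_single f fun g hgf hg => h g hg hgf,
    add_sub_cancel_right, nsmul_eq_mul]

theorem count_mul_add_le_translateSum (hψ : ∀ x, 0 ≤ ψ x) (x : ℝ) {f g : ℝ} (hg : g ∈ F)
    (hgf : g ≠ f) : F.count f * ψ (x - f) + ψ (x - g) ≤ translateSum F ψ x := by
  rw [translateSum, Multiset.sum_map_eq_count_nsmul_add _ _ f, nsmul_eq_mul]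
  gcongr
  exact Multiset.single_le_sum (Multiset.forall_mem_map_iff.2 fun _ _ => hψ _) _
    (Multiset.mem_map_of_mem _ (by simp [hg, hgf]))

theorem count_mul_le_translateSum (hψ : ∀ x, 0 ≤ ψ x) (x f : ℝ) :
    F.count f * ψ (x - f) ≤ translateSum F ψ x := by
  rw [translateSum, Multiset.sum_map_eq_count_nsmul_add _ _ f, nsmul_eq_mul]
  exact le_add_of_nonneg_right
    (Multiset.sum_nonneg (Multiset.forall_mem_map_iff.2 fun _ _ => hψ _))

theorem translateSum_ae_eq_zero (h : ψ =ᵐ[volume] 0) : translateSum F ψ =ᵐ[volume] 0 := by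
  induction F using Multiset.induction_on with
  | empty => exact .of_forall fun x => by simp [translateSum]
  | cons f F ih =>
    filter_upwards [ih, (quasiMeasurePreserving_add_right volume (-f)).ae h] with x hx hxf
    simp_all [translateSum, ← sub_eq_add_neg]

end translateSum

section Tiling

variable {F : Multiset ℝ} {ψ : ℝ → ℝ} {a b : ℝ}

theorem ae_translateSum_le_one (htile : ∀ᵐ x, translateSum F ψ x = (Icc a b).indicator 1 x) :
    ∀ᵐ x, translateSum F ψ x ≤ 1 :=
  htile.mono fun x hx => hx ▸ indicator_le_self' (fun _ _ => zero_le_one) x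

theorem not_translateSum_ae_eq_zero (hab : a < b)
    (htile : ∀ᵐ x, translateSum F ψ x = (Icc a b).indicator 1 x) :
    ¬translateSum F ψ =ᵐ[volume] 0 := by
  intro hzero
  obtain ⟨x, hx, hxtile, hx0⟩ := exists_mem_Ioo_of_ae (htile.and hzero) hab
  rw [indicator_of_mem (Ioo_subset_Icc_self hx)] at hxtile
  exact one_ne_zero (hxtile.symm.trans hx0)

theorem ne_zero_of_tiling (hab : a < b)
    (htile : ∀ᵐ x, translateSum F ψ x = (Icc a b).indicator 1 x) : F ≠ 0 := by
  rintro rfl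
  exact not_translateSum_ae_eq_zero hab htile (.of_forall fun x => by simp [translateSum])

theorem volume_support_ne_zero (hab : a < b)
    (htile : ∀ᵐ x, translateSum F ψ x = (Icc a b).indicator 1 x) :
    volume (Function.support ψ) ≠ 0 := fun hnull =>
  not_translateSum_ae_eq_zero hab htile
    (translateSum_ae_eq_zero ((Measure.measure_support_eq_zero_iff _).1 hnull))

theorem ae_add_mem_Icc_of_mem_support (hψ : ∀ x, 0 ≤ ψ x)
    (htile : ∀ᵐ x, translateSum F ψ x = (Icc a b).indicator 1 x) {f : ℝ} (hf : f ∈ F) :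
    ∀ᵐ t, t ∈ Function.support ψ → t + f ∈ Icc a b := by
  filter_upwards [(quasiMeasurePreserving_add_right volume f).ae htile] with t ht htψ
  by_contra hout
  have hle := count_mul_le_translateSum hψ (t + f) f (F := F)
  rw [ht, indicator_of_notMem hout, add_sub_cancel_right] at hle
  have hcount : (0 : ℝ) < F.count f := by exact_mod_cast Multiset.count_pos.2 hf
  exact htψ (le_antisymm (nonpos_of_mul_nonpos_right hle hcount) (hψ t))

theorem exists_Ioo_subset_support_subset_Icc (hψ : ∀ x, 0 ≤ ψ x)
    (hconn : IsPreconnected (Function.support ψ)) (hab : a < b)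
    (htile : ∀ᵐ x, translateSum F ψ x = (Icc a b).indicator 1 x) :
    ∃ α β, α < β ∧ Ioo α β ⊆ Function.support ψ ∧ Function.support ψ ⊆ Icc α β := by
  obtain ⟨f, hf⟩ := Multiset.exists_mem_of_ne_zero (ne_zero_of_tiling hab htile)
  have hnull := volume_support_ne_zero hab htile
  have hbdd : ∀ᵐ t, t ∈ Function.support ψ → t ∈ Icc (a - f) (b - f) :=
    (ae_add_mem_Icc_of_mem_support hψ htile hf).mono fun t ht hts => by
      simpa [sub_le_iff_le_add, le_sub_iff_add_le] using ht hts
  obtain ⟨hbelow, habove⟩ := hconn.ordConnected.bddBelow_bddAbove_of_ae_subset hbdd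
  have hsub := subset_Icc_csInf_csSup hbelow habove
  refine ⟨_, _, not_le.1 fun hle => hnull ?_,
    IsConnected.Ioo_csInf_csSup_subset ⟨nonempty_of_measure_ne_zero hnull, hconn⟩ hbelow habove,
    hsub⟩
  exact measure_mono_null hsub (by simp [Real.volume_Icc, hle])

theorem ae_count_mul_le_one (hψ : ∀ x, 0 ≤ ψ x)
    (htile : ∀ᵐ x, translateSum F ψ x = (Icc a b).indicator 1 x) (f : ℝ) :
    ∀ᵐ t, F.count f * ψ t ≤ 1 := by
  filter_upwards [(quasiMeasurePreserving_add_right volume f).ae (ae_translateSum_le_one htile)]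
    with t ht
  simpa using (count_mul_le_translateSum hψ (t + f) f).trans ht

theorem ae_count_mul_eq_one_of_isolated
    (htile : ∀ᵐ x, translateSum F ψ x = (Icc a b).indicator 1 x) {f : ℝ} (hf : f ∈ F)
    {U : Set ℝ} (hU : ∀ t ∈ U, ψ t ≠ 0 ∧ ∀ g ∈ F, g ≠ f → ψ (t + f - g) = 0) :
    ∀ᵐ t, t ∈ U → F.count f * ψ t = 1 := by
  filter_upwards [(quasiMeasurePreserving_add_right volume f).ae htile] with t ht htU
  rw [translateSum_add_eq_count_mul (hU t htU).2] at ht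
  by_cases hmem : t + f ∈ Icc a b
  · rwa [indicator_of_mem hmem] at ht
  · rw [indicator_of_notMem hmem] at ht
    exact absurd ht (mul_ne_zero (by exact_mod_cast (Multiset.count_ne_zero.2 hf)) (hU t htU).1)

variable {α β : ℝ}

theorem exists_ae_count_mul_eq_one_near_left (hαβ : α < β)
    (hIoo : Ioo α β ⊆ Function.support ψ) (hIcc : Function.support ψ ⊆ Icc α β)
    (htile : ∀ᵐ x, translateSum F ψ x = (Icc a b).indicator 1 x) {f : ℝ} (hf : f ∈ F)
    (hmin : ∀ g ∈ F, f ≤ g) :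
    ∃ δ > 0, ∀ᵐ t, t ∈ Ioo α (α + δ) → F.count f * ψ t = 1 := by
  obtain ⟨δ, hδ, hsep⟩ := Metric.exists_pos_forall_ne_le_dist F.toFinset f
  refine ⟨min δ (β - α), lt_min hδ (sub_pos.2 hαβ), ae_count_mul_eq_one_of_isolated htile hf ?_⟩
  intro t ht
  refine ⟨hIoo ⟨ht.1, by linarith [ht.2, min_le_right δ (β - α)]⟩, fun g hg hgf => ?_⟩
  have hfg := hsep g (Multiset.mem_toFinset.2 hg) hgf
  rw [Real.dist_eq, abs_of_nonneg (sub_nonneg.2 (hmin g hg))] at hfg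
  refine Function.notMem_support.1 fun h => (hIcc h).1.not_gt ?_
  linarith [ht.2, min_le_left δ (β - α)]

theorem exists_ae_count_mul_eq_one_near_right (hαβ : α < β)
    (hIoo : Ioo α β ⊆ Function.support ψ) (hIcc : Function.support ψ ⊆ Icc α β)
    (htile : ∀ᵐ x, translateSum F ψ x = (Icc a b).indicator 1 x) {f : ℝ} (hf : f ∈ F)
    (hmax : ∀ g ∈ F, g ≤ f) :
    ∃ δ > 0, ∀ᵐ t, t ∈ Ioo (β - δ) β → F.count f * ψ t = 1 := by
  obtain ⟨δ, hδ, hsep⟩ := Metric.exists_pos_forall_ne_le_dist F.toFinset f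
  refine ⟨min δ (β - α), lt_min hδ (sub_pos.2 hαβ), ae_count_mul_eq_one_of_isolated htile hf ?_⟩
  intro t ht
  refine ⟨hIoo ⟨by linarith [ht.1, min_le_right δ (β - α)], ht.2⟩, fun g hg hgf => ?_⟩
  have hfg := hsep g (Multiset.mem_toFinset.2 hg) hgf
  rw [Real.dist_eq, abs_of_nonpos (sub_nonpos.2 (hmax g hg))] at hfg
  refine Function.notMem_support.1 fun h => (hIcc h).2.not_gt ?_
  linarith [ht.1, min_le_left δ (β - α)]

theorem add_sub_le_of_ae_count_mul_eq_one_near_right (hψ : ∀ x, 0 ≤ ψ x)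
    (hIoo : Ioo α β ⊆ Function.support ψ)
    (htile : ∀ᵐ x, translateSum F ψ x = (Icc a b).indicator 1 x) {f δ : ℝ} (hδ : 0 < δ)
    (hright : ∀ᵐ t, t ∈ Ioo (β - δ) β → F.count f * ψ t = 1) {g : ℝ} (hg : g ∈ F)
    (hfg : f ≤ g) (hgf : g ≠ f) : f + (β - α) ≤ g := by
  by_contra! hlt
  have hright' : ∀ᵐ x, x - f ∈ Ioo (β - δ) β → F.count f * ψ (x - f) = 1 := by
    simpa [← sub_eq_add_neg] using (quasiMeasurePreserving_add_right volume (-f)).ae hright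
  obtain ⟨x, hx, hxf, hx1⟩ := exists_mem_Ioo_of_ae (hright'.and (ae_translateSum_le_one htile))
    (show max (g + α) (f + β - δ) < f + β from max_lt (by linarith) (by linarith))
  obtain ⟨⟨hgx, hfx⟩, hxβ⟩ := And.imp_left max_lt_iff.1 hx
  have hxg : 0 < ψ (x - g) := (hψ _).lt_of_ne' (hIoo ⟨by linarith, by linarith⟩)
  have hsum := count_mul_add_le_translateSum hψ x hg hgf
  rw [hxf ⟨by linarith, by linarith⟩] at hsum
  linarith

theorem ae_count_mul_eq_one_of_forall_ne_add_le (hIoo : Ioo α β ⊆ Function.support ψ)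
    (hIcc : Function.support ψ ⊆ Icc α β)
    (htile : ∀ᵐ x, translateSum F ψ x = (Icc a b).indicator 1 x) {f : ℝ} (hf : f ∈ F)
    (hgap : ∀ g ∈ F, g ≠ f → f + (β - α) ≤ g) :
    ∀ᵐ t, t ∈ Ioo α β → F.count f * ψ t = 1 := by
  refine ae_count_mul_eq_one_of_isolated htile hf fun t ht => ⟨hIoo ht, fun g hg hgf => ?_⟩
  refine Function.notMem_support.1 fun h => (hIcc h).1.not_gt ?_
  linarith [hgap g hg hgf, ht.2]

end Tiling

theorem connected_tiling_of_interval_general (F : Multiset ℝ) (a b : ℝ) (hab : a < b)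
    (ψ : ℝ → ℝ) (hpos : ∀ x, 0 ≤ ψ x)
    (hconn : IsPreconnected (Function.support ψ))
    (htile : ∀ᵐ x ∂(volume : Measure ℝ),
      (F.map (fun f => ψ (x - f))).sum
        = Set.indicator (Set.Icc a b) (fun _ => (1 : ℝ)) x) :
    ∃ m : ℕ, 1 ≤ m ∧ ∃ c c' : ℝ, c < c' ∧
      ∀ᵐ x ∂(volume : Measure ℝ),
        (m : ℝ) * ψ x = Set.indicator (Set.Icc c c') (fun _ => (1 : ℝ)) x := by
  obtain ⟨α, β, hαβ, hIoo, hIcc⟩ := exists_Ioo_subset_support_subset_Icc hpos hconn hab htile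
  have hF := ne_zero_of_tiling hab htile
  obtain ⟨f₁, hf₁, hmin⟩ := Multiset.exists_min_image id hF
  obtain ⟨fN, hfN, hmax⟩ := Multiset.exists_max_image id hF
  obtain ⟨δL, hδL, hleft⟩ :=
    exists_ae_count_mul_eq_one_near_left hαβ hIoo hIcc htile hf₁ hmin
  obtain ⟨δR, hδR, hright⟩ :=
    exists_ae_count_mul_eq_one_near_right hαβ hIoo hIcc htile hfN hmax
  have hcount : F.count fN = F.count f₁ :=
    le_antisymm
      (le_of_ae_mul_eq_one_of_ae_mul_le_one (lt_add_of_pos_right α hδL) hleft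
        (ae_count_mul_le_one hpos htile fN))
      (le_of_ae_mul_eq_one_of_ae_mul_le_one (sub_lt_self β hδR) hright
        (ae_count_mul_le_one hpos htile f₁))
  rw [hcount] at hright
  have hgap : ∀ g ∈ F, g ≠ f₁ → f₁ + (β - α) ≤ g := fun g hg hgf =>
    add_sub_le_of_ae_count_mul_eq_one_near_right hpos hIoo htile hδR hright hg (hmin g hg) hgf
  refine ⟨F.count f₁, Multiset.one_le_count_iff_mem.2 hf₁, α, β, hαβ,
    ae_eq_indicator_Icc_of_ae_Ioo
      (ae_count_mul_eq_one_of_forall_ne_add_le hIoo hIcc htile hf₁ hgap) fun x hx => ?_⟩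
  rw [Function.notMem_support.1 fun h => hx (hIcc h), mul_zero]

/-- **Connected tilings of intervals.**  Let `F` be a finite multiset in `ℝ`, let `[a,b]` be a
nondegenerate interval, and let `ψ : ℝ → [0,∞)` be measurable with connected support.  If
`1_F * ψ =_ae 1_{[a,b]}`, i.e. `∑_{f ∈ F} ψ(x - f) = 1_{[a,b]}(x)` for a.e. `x` (with `f`
counted with multiplicity), then `m • ψ =_ae 1_{[c,c']}` for some natural number `m ≥ 1` and
some `c < c'`. -/
theorem connected_tiling_of_interval (F : Multiset ℝ) (a b : ℝ) (hab : a < b)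
    (ψ : ℝ → ℝ) (hmeas : Measurable ψ) (hpos : ∀ x, 0 ≤ ψ x)
    (hconn : IsPreconnected (Function.support ψ))
    (htile : ∀ᵐ x ∂(volume : Measure ℝ),
      (F.map (fun f => ψ (x - f))).sum
        = Set.indicator (Set.Icc a b) (fun _ => (1 : ℝ)) x) :
    ∃ m : ℕ, 1 ≤ m ∧ ∃ c c' : ℝ, c < c' ∧
      ∀ᵐ x ∂(volume : Measure ℝ),
        (m : ℝ) * ψ x = Set.indicator (Set.Icc c c') (fun _ => (1 : ℝ)) x :=
  connected_tiling_of_interval_general F a b hab ψ hpos hconn htile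
end
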